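/- arXiv:2211.03120 — 6 statements merged into one kernel-verified Lean document; each statement's English description precedes it below -/
import Mathlib

section
/- Let G be a finite group and H a subgroup of G. Then H is a perfect code of G if and only if H is a perfect code of every subgroup K of G with H ≤ K ≤ G (i.e., H is a perfect code of G if and only if for all subgroups K containing H, H is a perfect code of K). -/
/-! A left transversal of `H` in `G` meets every intermediate subgroup `K ⊇ H` in a left
transversal of `H` in `K`, because the representative `t` of `k ∈ K` satisfies
`t ∈ k H ⊆ K`. Conversely, `K = G` is one of the intermediate subgroups. -/

/-- A subgroup `H` of a group `G` is a *perfect code* of `G` if `H` admits an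
inverse-closed left transversal in `G`, i.e. there is a set `T ⊆ G` with
`T⁻¹ = T` such that every element of `G` lies in exactly one left coset `tH`, `t ∈ T`. -/
def IsPerfectCode {G : Type*} [Group G] (H : Subgroup G) : Prop :=
  ∃ T : Set G, T⁻¹ = T ∧ ∀ g : G, ∃! t : G, t ∈ T ∧ t⁻¹ * g ∈ H

namespace IsPerfectCode

variable {G G' : Type*} [Group G] [Group G'] {H : Subgroup G}

theorem comap {f : G' →* G} (hf : Function.Injective f) (hH : H ≤ f.range)
    (h : IsPerfectCode H) : IsPerfectCode (H.comap f) := by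
  obtain ⟨T, hT_inv, hT⟩ := h
  refine ⟨f ⁻¹' T, ?_, fun g => ?_⟩
  · ext x
    rw [Set.mem_inv, Set.mem_preimage, map_inv, ← Set.mem_inv, hT_inv, Set.mem_preimage]
  obtain ⟨t, ⟨htT, htH⟩, ht_unique⟩ := hT (f g)
  obtain ⟨t', rfl⟩ : t ∈ f.range := by
    simpa using f.range.mul_mem ⟨g, rfl⟩ (f.range.inv_mem (hH htH))
  refine ⟨t', ⟨htT, by simpa using htH⟩, fun s ⟨hsT, hsH⟩ => hf ?_⟩
  exact ht_unique (f s) ⟨hsT, by simpa using hsH⟩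

theorem of_comap {f : G' →* G} (hf : Function.Surjective f)
    (h : IsPerfectCode (H.comap f)) : IsPerfectCode H := by
  obtain ⟨T, hT_inv, hT⟩ := h
  refine ⟨f '' T, by rw [← Set.image_inv, hT_inv], ?_⟩
  intro g
  obtain ⟨g', rfl⟩ := hf g
  obtain ⟨t, ⟨htT, htH⟩, ht_unique⟩ := hT g'
  refine ⟨f t, ⟨Set.mem_image_of_mem f htT, by simpa using htH⟩, ?_⟩
  rintro _ ⟨⟨s, hsT, rfl⟩, hsH⟩
  rw [ht_unique s ⟨hsT, by simpa using hsH⟩]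

end IsPerfectCode

theorem perfectCode_iff_forall_intermediate_general {G : Type*} [Group G]
    (H : Subgroup G) :
    IsPerfectCode H ↔ ∀ K : Subgroup G, H ≤ K → IsPerfectCode (H.subgroupOf K) := by
  refine ⟨fun h K hHK => h.comap K.subtype_injective (by simpa using hHK), fun h => ?_⟩
  exact IsPerfectCode.of_comap (fun g => ⟨⟨g, trivial⟩, rfl⟩) (h ⊤ le_top)

theorem perfectCode_iff_forall_intermediate {G : Type*} [Group G] [Finite G]
    (H : Subgroup G) :
    IsPerfectCode H ↔ ∀ K : Subgroup G, H ≤ K → IsPerfectCode (H.subgroupOf K) :=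
  perfectCode_iff_forall_intermediate_general H
end

section
/- Let G be a finite group, H a subgroup of G that is a perfect code of G, and g ∈ G. Then the conjugate subgroup g⁻¹Hg is also a perfect code of G. -/
theorem IsPerfectCode.map_mulEquiv {G G' : Type*} [Group G] [Group G'] {H : Subgroup G}
    (hH : IsPerfectCode H) (e : G ≃* G') : IsPerfectCode (H.map e.toMonoidHom) := by
  obtain ⟨T, hT_inv, hT⟩ := hH
  refine ⟨e.symm ⁻¹' T, ?_, fun x => ?_⟩
  · ext t
    simp only [Set.mem_inv, Set.mem_preimage, map_inv]
    rw [← Set.mem_inv, hT_inv]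
  · simp only [Set.mem_preimage, Subgroup.mem_map_equiv, map_mul, map_inv]
    exact e.symm.bijective.existsUnique_iff.mp (hT (e.symm x))

theorem perfectCode_conj_general {G : Type*} [Group G] (H : Subgroup G)
    (hH : IsPerfectCode H) (g : G) :
    IsPerfectCode (H.map (MulAut.conj g⁻¹).toMonoidHom) :=
  hH.map_mulEquiv (MulAut.conj g⁻¹)

theorem perfectCode_conj {G : Type*} [Group G] [Finite G] (H : Subgroup G)
    (hH : IsPerfectCode H) (g : G) :
    IsPerfectCode (H.map (MulAut.conj g⁻¹).toMonoidHom) :=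
  perfectCode_conj_general H hH g
end

section
/- Let G be a finite group and H a normal subgroup of G. Then H is a perfect code of G if and only if for all x ∈ G with x² ∈ H, there exists h ∈ H such that (xh)² = 1. -/
open Subgroup

theorem existsUnique_mem_and_iff {α : Type*} {T : Set α} {P : α → Prop} :
    (∃! t, t ∈ T ∧ P t) ↔ ∃! t : T, P t :=
  ⟨fun ⟨t, ⟨htT, ht⟩, h⟩ => ⟨⟨t, htT⟩, ht, fun s hs => Subtype.ext (h s ⟨s.2, hs⟩)⟩,
    fun ⟨⟨t, htT⟩, ht, h⟩ =>
      ⟨t, ⟨htT, ht⟩, fun s ⟨hs, hP⟩ => congrArg Subtype.val (h ⟨s, hs⟩ hP)⟩⟩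

theorem isPerfectCode_iff_exists_isComplement {G : Type*} [Group G] {H : Subgroup G} :
    IsPerfectCode H ↔ ∃ T : Set G, T⁻¹ = T ∧ IsComplement T H := by
  simp only [IsPerfectCode, isComplement_iff_existsUnique_inv_mul_mem, existsUnique_mem_and_iff,
    SetLike.mem_coe]

theorem exists_section_map_inv {α β : Type*} [InvolutiveInv α] [InvolutiveInv β] (p : β → α)
    (hp : ∀ b, p b⁻¹ = (p b)⁻¹) (hsurj : Function.Surjective p)
    (hfix : ∀ a, a⁻¹ = a → ∃ b, p b = a ∧ b⁻¹ = b) :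
    ∃ s : α → β, (∀ a, p (s a) = a) ∧ ∀ a, s a⁻¹ = (s a)⁻¹ := by
  classical
  -- Any linear order decides which element of each pair `{a, a⁻¹}` gets the chosen lift.
  let _ : LinearOrder α := WellOrderingRel.isWellOrder.linearOrder
  have hlift : ∀ a, ∃ b, p b = a ∧ (a⁻¹ = a → b⁻¹ = b) := fun a =>
    if ha : a⁻¹ = a then (hfix a ha).imp fun b hb => ⟨hb.1, fun _ => hb.2⟩
    else (hsurj a).imp fun b hb => ⟨hb, fun h => absurd h ha⟩
  choose t ht hfixed using hlift
  refine ⟨fun a => if a ≤ a⁻¹ then t a else (t a⁻¹)⁻¹, fun a => ?_, fun a => ?_⟩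
  · dsimp only
    split_ifs
    · exact ht a
    · rw [hp, ht, inv_inv]
  · rcases lt_trichotomy a a⁻¹ with h | h | h
    · simp [h.le, not_le.2 h]
    · simp [← h, hfixed a h.symm]
    · simp [h.le, not_le.2 h]

section Normal

variable {G : Type*} [Group G] {H : Subgroup G} [H.Normal]

theorem sq_mem_iff_mk_inv_eq_self {x : G} : x ^ 2 ∈ H ↔ (x : G ⧸ H)⁻¹ = x := by
  rw [inv_eq_iff_mul_eq_one, ← QuotientGroup.mk_mul, QuotientGroup.eq_one_iff, sq]

theorem Subgroup.IsComplement.inv_eq_self_of_mk_inv_eq_self {T : Set G} (hT : IsComplement T H)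
    (hTinv : T⁻¹ = T) {t : G} (ht : t ∈ T) (hmk : (t : G ⧸ H)⁻¹ = t) : t⁻¹ = t := by
  have htinv : t⁻¹ ∈ T := hTinv ▸ Set.inv_mem_inv.mpr ht
  obtain ⟨_, -, huniq⟩ := isComplement_subgroup_right_iff_existsUnique_quotientGroupMk.mp hT t
  have := (huniq ⟨t⁻¹, htinv⟩ (by simpa using hmk)).trans (huniq ⟨t, ht⟩ rfl).symm
  exact congrArg Subtype.val this

theorem IsPerfectCode.exists_mul_sq_eq_one (hP : IsPerfectCode H) {x : G} (hx : x ^ 2 ∈ H) :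
    ∃ h ∈ H, (x * h) ^ 2 = 1 := by
  obtain ⟨T, hTinv, hT⟩ := isPerfectCode_iff_exists_isComplement.mp hP
  obtain ⟨⟨t, ht⟩, htx, -⟩ :=
    isComplement_subgroup_right_iff_existsUnique_quotientGroupMk.mp hT x
  have htt : t⁻¹ = t :=
    hT.inv_eq_self_of_mk_inv_eq_self hTinv ht (htx ▸ sq_mem_iff_mk_inv_eq_self.mp hx)
  refine ⟨x⁻¹ * t, QuotientGroup.eq.mp htx.symm, ?_⟩
  rw [mul_inv_cancel_left, sq, ← inv_eq_iff_mul_eq_one, htt]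

theorem isPerfectCode_of_forall_sq_mem (hH : ∀ x : G, x ^ 2 ∈ H → ∃ h ∈ H, (x * h) ^ 2 = 1) :
    IsPerfectCode H := by
  have hfix (q : G ⧸ H) (hq : q⁻¹ = q) : ∃ g : G, (g : G ⧸ H) = q ∧ g⁻¹ = g := by
    obtain ⟨x, rfl⟩ := QuotientGroup.mk_surjective q
    obtain ⟨h, hh, hxh⟩ := hH x (sq_mem_iff_mk_inv_eq_self.mpr hq)
    refine ⟨x * h, ?_, inv_eq_of_mul_eq_one_right (sq (x * h) ▸ hxh)⟩
    rw [QuotientGroup.mk_mul, (QuotientGroup.eq_one_iff h).mpr hh, mul_one]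
  obtain ⟨s, hs, hsinv⟩ := exists_section_map_inv ((↑) : G → G ⧸ H) (fun _ => rfl)
    QuotientGroup.mk_surjective hfix
  refine isPerfectCode_iff_exists_isComplement.mpr
    ⟨Set.range s, ?_, isComplement_range_left hs⟩
  simp_rw [Set.inv_range, ← hsinv]
  exact inv_surjective.range_comp s

end Normal

theorem perfectCode_iff_of_normal_general {G : Type*} [Group G] (H : Subgroup G)
    (hn : H.Normal) :
    IsPerfectCode H ↔ ∀ x : G, x ^ 2 ∈ H → ∃ h ∈ H, (x * h) ^ 2 = 1 :=
  ⟨fun hP _ => hP.exists_mul_sq_eq_one, isPerfectCode_of_forall_sq_mem⟩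

theorem perfectCode_iff_of_normal {G : Type*} [Group G] [Finite G] (H : Subgroup G)
    (hn : H.Normal) :
    IsPerfectCode H ↔ ∀ x : G, x ^ 2 ∈ H → ∃ h ∈ H, (x * h) ^ 2 = 1 :=
  perfectCode_iff_of_normal_general H hn
end

section
/- Let G be a finite group and H a subgroup of G such that H is a 2-group. Then H is a perfect code of G if and only if H is a perfect code of its normalizer N_G(H). -/
private lemma card_split {Q : Type*} [DecidableEq Q] (s : Finset Q) (a : Q) (ha : a ∈ s)
    (p : Q → Prop) [DecidablePred p] :
    (s.filter p).card = ((s.erase a).filter p).card + (if p a then 1 else 0) := by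
  by_cases h : p a
  · rw [if_pos h]
    have he : s.filter p = insert a ((s.erase a).filter p) := by
      ext c
      simp only [Finset.mem_filter, Finset.mem_insert, Finset.mem_erase]
      constructor
      · rintro ⟨hc, hpc⟩
        by_cases hca : c = a
        · exact Or.inl hca
        · exact Or.inr ⟨⟨hca, hc⟩, hpc⟩
      · rintro (rfl | ⟨⟨_, hc⟩, hpc⟩)
        · exact ⟨ha, h⟩
        · exact ⟨hc, hpc⟩
    rw [he, Finset.card_insert_of_notMem (by simp)]
  · rw [if_neg h, add_zero]
    congr 1
    ext c
    simp only [Finset.mem_filter, Finset.mem_erase]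
    constructor
    · rintro ⟨hc, hpc⟩
      exact ⟨⟨fun hca => h (hca ▸ hpc), hc⟩, hpc⟩
    · rintro ⟨⟨_, hc⟩, hpc⟩
      exact ⟨hc, hpc⟩

private lemma exists_matching {Q : Type*} [DecidableEq Q]
    (E R : Q → Q → Prop) (P : Q → Prop)
    [DecidableRel E] [DecidableRel R]
    (Erefl : ∀ a, E a a)
    (Esymm : ∀ a b, E a b → E b a)
    (Rsymm : ∀ a b, R a b → R b a)
    (compat : ∀ a b c, R a b → E b c → R a c)
    (coh : ∀ a b c, R a b → R a c → E b c)
    (s : Finset Q)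
    (hcard : ∀ a ∈ s, (s.filter (E a)).card = (s.filter (R a)).card)
    (hpar : ∀ a ∈ s, R a a → Even (s.filter (E a)).card ∨ P a) :
    ∃ σ : Q → Q, ∀ a ∈ s, σ a ∈ s ∧ σ (σ a) = a ∧ R a (σ a) ∧ (σ a = a → P a) := by
  induction s using Finset.strongInduction with
  | _ s ih =>
  rcases Finset.eq_empty_or_nonempty s with rfl | ⟨a, ha⟩
  · exact ⟨id, by simp⟩
  · have haE : a ∈ s.filter (E a) := Finset.mem_filter.mpr ⟨ha, Erefl a⟩
    have hRne : (s.filter (R a)).Nonempty := by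
      rw [← Finset.card_pos, ← hcard a ha]
      exact Finset.card_pos.mpr ⟨a, haE⟩
    by_cases hex : ∃ b ∈ s, R a b ∧ b ≠ a
    · obtain ⟨b, hb, Rab, hba⟩ := hex
      have hbs : b ∈ s.erase a := Finset.mem_erase.mpr ⟨hba, hb⟩
      have hsub : (s.erase a).erase b ⊂ s :=
        (Finset.erase_ssubset hbs).trans_subset (Finset.erase_subset _ _)
      have hmem' : ∀ c, c ∈ (s.erase a).erase b ↔ c ∈ s ∧ c ≠ a ∧ c ≠ b := by
        intro c
        simp only [Finset.mem_erase]
        tauto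
      have k1 : ∀ c, E c a ↔ R c b := by
        intro c
        constructor
        · intro h
          exact Rsymm _ _ (compat b a c (Rsymm _ _ Rab) (Esymm _ _ h))
        · intro h
          exact coh b c a (Rsymm _ _ h) (Rsymm _ _ Rab)
      have k2 : ∀ c, E c b ↔ R c a := by
        intro c
        constructor
        · intro h
          exact Rsymm _ _ (compat a b c Rab (Esymm _ _ h))
        · intro h
          exact coh a c b (Rsymm _ _ h) Rab
      have hsplit : ∀ (p : Q → Prop) (_ : DecidablePred p),
          (s.filter p).card = (((s.erase a).erase b).filter p).card
            + (if p a then 1 else 0) + (if p b then 1 else 0) := by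
        intro p _
        have h1 := card_split s a ha p
        have h2 := card_split (s.erase a) b hbs p
        omega
      have hcard' : ∀ c ∈ (s.erase a).erase b,
          (((s.erase a).erase b).filter (E c)).card
            = (((s.erase a).erase b).filter (R c)).card := by
        intro c hc
        have h1 := hsplit (E c) inferInstance
        have h2 := hsplit (R c) inferInstance
        have e1 : (if E c a then 1 else 0) = (if R c b then 1 else 0) := by
          simp only [k1 c]
        have e2 : (if E c b then 1 else 0) = (if R c a then 1 else 0) := by
          simp only [k2 c]
        have h3 := hcard c ((hmem' c).mp hc).1
        omega
      have hpar' : ∀ c ∈ (s.erase a).erase b, R c c →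
          Even ((((s.erase a).erase b)).filter (E c)).card ∨ P c := by
        intro c hc Rcc
        rcases hpar c ((hmem' c).mp hc).1 Rcc with hev | hP
        · left
          have h1 := hsplit (E c) inferInstance
          have e3 : E c a ↔ E c b := by
            constructor
            · intro h
              exact (k2 c).mpr (compat c c a Rcc h)
            · intro h
              exact Esymm _ _ (coh c a c ((k2 c).mp h) Rcc)
          rw [Nat.even_iff] at hev ⊢
          by_cases hca : E c a
          · rw [if_pos hca, if_pos (e3.mp hca)] at h1
            omega
          · rw [if_neg hca, if_neg (fun h => hca (e3.mpr h))] at h1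
            omega
        · exact Or.inr hP
      obtain ⟨σ', hσ'⟩ := ih _ hsub hcard' hpar'
      refine ⟨fun x => if x = a then b else if x = b then a else σ' x, ?_⟩
      have eva : (if a = a then b else if a = b then a else σ' a) = b := if_pos rfl
      have evb : (if b = a then b else if b = b then a else σ' b) = a := by
        rw [if_neg hba, if_pos rfl]
      have evc : ∀ c, c ≠ a → c ≠ b →
          (if c = a then b else if c = b then a else σ' c) = σ' c := by
        intro c h1 h2
        rw [if_neg h1, if_neg h2]
      intro c hc
      dsimp only
      by_cases hca : c = a
      · rw [hca, eva, evb]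
        exact ⟨hb, rfl, Rab, fun h => absurd h hba⟩
      · by_cases hcb : c = b
        · rw [hcb, evb, eva]
          exact ⟨ha, rfl, Rsymm _ _ Rab, fun h => absurd h.symm hba⟩
        · have hcs' : c ∈ (s.erase a).erase b := (hmem' c).mpr ⟨hc, hca, hcb⟩
          obtain ⟨hm, hinv, hR, hfix⟩ := hσ' c hcs'
          have hna : σ' c ≠ a := ((hmem' _).mp hm).2.1
          have hnb : σ' c ≠ b := ((hmem' _).mp hm).2.2
          rw [evc c hca hcb, evc (σ' c) hna hnb]
          exact ⟨((hmem' _).mp hm).1, hinv, hR, hfix⟩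
    · push_neg at hex
      obtain ⟨b, hbmem⟩ := hRne
      have hbs := (Finset.mem_filter.mp hbmem).1
      have Rab := (Finset.mem_filter.mp hbmem).2
      have hbeq : b = a := hex b hbs Rab
      subst hbeq
      have hRsingle : s.filter (R b) = {b} := by
        apply Finset.eq_singleton_iff_unique_mem.mpr
        exact ⟨hbmem, fun c hc => hex c (Finset.mem_filter.mp hc).1 (Finset.mem_filter.mp hc).2⟩
      have hEcard : (s.filter (E b)).card = 1 := by
        rw [hcard b hbs, hRsingle, Finset.card_singleton]
      have hEsingle : s.filter (E b) = {b} := by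
        obtain ⟨x, hx⟩ := Finset.card_eq_one.mp hEcard
        have hxb : b ∈ s.filter (E b) := Finset.mem_filter.mpr ⟨hbs, Erefl b⟩
        rw [hx] at hxb ⊢
        rw [Finset.mem_singleton] at hxb
        rw [hxb]
      have hPb : P b := by
        rcases hpar b hbs Rab with hev | hP
        · rw [hEcard] at hev
          exact absurd hev (by decide)
        · exact hP
      have hsub : s.erase b ⊂ s := Finset.erase_ssubset hbs
      have hmem' : ∀ c, c ∈ s.erase b ↔ c ∈ s ∧ c ≠ b := by
        intro c
        rw [Finset.mem_erase]
        tauto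
      have hEb : ∀ c ∈ s.erase b, ¬ E c b := by
        intro c hc h
        have hmm : c ∈ s.filter (E b) :=
          Finset.mem_filter.mpr ⟨((hmem' c).mp hc).1, Esymm _ _ h⟩
        rw [hEsingle, Finset.mem_singleton] at hmm
        exact ((hmem' c).mp hc).2 hmm
      have hRb : ∀ c ∈ s.erase b, ¬ R c b := by
        intro c hc h
        exact hEb c hc (Esymm _ _ (coh b b c Rab (Rsymm _ _ h)))
      have hcard' : ∀ c ∈ s.erase b,
          ((s.erase b).filter (E c)).card = ((s.erase b).filter (R c)).card := by
        intro c hc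
        have h1 := card_split s b hbs (E c)
        have h2 := card_split s b hbs (R c)
        rw [if_neg (hEb c hc)] at h1
        rw [if_neg (hRb c hc)] at h2
        have h3 := hcard c ((hmem' c).mp hc).1
        omega
      have hpar' : ∀ c ∈ s.erase b, R c c → Even ((s.erase b).filter (E c)).card ∨ P c := by
        intro c hc Rcc
        rcases hpar c ((hmem' c).mp hc).1 Rcc with hev | hP
        · left
          have h1 := card_split s b hbs (E c)
          rw [if_neg (hEb c hc)] at h1
          rw [Nat.even_iff] at hev ⊢
          omega
        · exact Or.inr hP
      obtain ⟨σ', hσ'⟩ := ih _ hsub hcard' hpar'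
      refine ⟨fun x => if x = b then b else σ' x, ?_⟩
      have evb : (if b = b then b else σ' b) = b := if_pos rfl
      have evc : ∀ c, c ≠ b → (if c = b then b else σ' c) = σ' c := fun c h => if_neg h
      intro c hc
      dsimp only
      by_cases hcb : c = b
      · rw [hcb, evb, evb]
        exact ⟨hbs, rfl, Rab, fun _ => hPb⟩
      · have hcs' : c ∈ s.erase b := (hmem' c).mpr ⟨hc, hcb⟩
        obtain ⟨hm, hinv, hR, hfix⟩ := hσ' c hcs'
        have hnb : σ' c ≠ b := ((hmem' _).mp hm).2
        rw [evc c hcb, evc (σ' c) hnb]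
        exact ⟨((hmem' _).mp hm).1, hinv, hR, hfix⟩


open MulAction in
private lemma stab_mem_iff {G : Type*} [Group G] (H : Subgroup G) (g : G) (h : H) :
    h ∈ stabilizer H ((g : G ⧸ H)) ↔ g⁻¹ * (h : G)⁻¹ * g ∈ H := by
  rw [MulAction.mem_stabilizer_iff]
  show ((((h : G) * g : G)) : G ⧸ H) = (g : G ⧸ H) ↔ _
  rw [QuotientGroup.eq]
  constructor
  · intro hh
    have : ((h : G) * g)⁻¹ * g = g⁻¹ * (h:G)⁻¹ * g := by group
    rwa [this] at hh
  · intro hh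
    have : ((h : G) * g)⁻¹ * g = g⁻¹ * (h:G)⁻¹ * g := by group
    rwa [this]

open MulAction in
private lemma stab_card_eq {G : Type*} [Group G] (H : Subgroup G) (g : G) :
    Nat.card (stabilizer H ((g⁻¹ : G) : G ⧸ H)) = Nat.card (stabilizer H ((g : G) : G ⧸ H)) := by
  apply Nat.card_congr
  refine
    { toFun := fun σ => ⟨⟨g * (σ : H) * g⁻¹, ?_⟩, ?_⟩
      invFun := fun τ => ⟨⟨g⁻¹ * (τ : H) * g, ?_⟩, ?_⟩
      left_inv := ?_
      right_inv := ?_ }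
  · have h1 := (stab_mem_iff H g⁻¹ (σ : H)).mp σ.2
    rw [inv_inv] at h1
    have : g * ((σ : H) : G) * g⁻¹ = (g * (((σ : H) : G))⁻¹ * g⁻¹)⁻¹ := by group
    rw [this]
    exact inv_mem h1
  · rw [stab_mem_iff]
    have : g⁻¹ * (g * (((σ : H) : G)) * g⁻¹)⁻¹ * g = (((σ : H) : G))⁻¹ := by group
    rw [this]
    exact inv_mem ((σ : H)).2
  · have h1 := (stab_mem_iff H g (τ : H)).mp τ.2
    have : g⁻¹ * ((τ : H) : G) * g = (g⁻¹ * (((τ : H) : G))⁻¹ * g)⁻¹ := by group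
    rw [this]
    exact inv_mem h1
  · rw [stab_mem_iff, inv_inv]
    have : g * (g⁻¹ * (((τ : H) : G)) * g)⁻¹ * g⁻¹ = (((τ : H) : G))⁻¹ := by group
    rw [this]
    exact inv_mem ((τ : H)).2
  · intro σ
    apply Subtype.ext
    apply Subtype.ext
    show g⁻¹ * (g * (((σ : H) : G)) * g⁻¹) * g = ((σ : H) : G)
    group
  · intro τ
    apply Subtype.ext
    apply Subtype.ext
    show g * (g⁻¹ * (((τ : H) : G)) * g) * g⁻¹ = ((τ : H) : G)
    group



private lemma step_sq {G : Type*} [Group G] (H : Subgroup G)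
    (hN : IsPerfectCode (H.subgroupOf (Subgroup.normalizer (H : Set G)))) :
    ∀ g : G, g ∈ Subgroup.normalizer (H : Set G) → g * g ∈ H → ∃ t : G, t⁻¹ * g ∈ H ∧ t * t = 1 := by
  set N := Subgroup.normalizer (H : Set G) with hNdef
  obtain ⟨S, hSinv, hS⟩ := hN
  have hmemS : ∀ x : N, x ∈ S ↔ x⁻¹ ∈ S := by
    intro x
    nth_rewrite 1 [← hSinv]
    exact Set.mem_inv
  intro g hg hgg
  set g1 : N := ⟨g, hg⟩ with hg1
  obtain ⟨t1, ⟨htS, htH⟩, huniq⟩ := hS g1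
  have htS' : t1⁻¹ ∈ S := (hmemS t1).mp htS
  have hgg1 : g1 * g1 ∈ H.subgroupOf N := by
    rw [Subgroup.mem_subgroupOf]
    exact hgg
  haveI : (H.subgroupOf N).Normal := Subgroup.normal_in_normalizer
  have htH' : (t1⁻¹)⁻¹ * g1 ∈ H.subgroupOf N := by
    rw [inv_inv]
    have key : t1 * g1 = (g1 * g1) * (g1⁻¹ * (t1⁻¹ * g1)⁻¹ * g1) := by
      group
    rw [key]
    exact mul_mem hgg1 (Subgroup.Normal.conj_mem' ‹(H.subgroupOf N).Normal› _ (inv_mem htH) g1)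
  have heq : t1⁻¹ = t1 := huniq t1⁻¹ ⟨htS', htH'⟩
  refine ⟨(t1 : G), ?_, ?_⟩
  · have := Subgroup.mem_subgroupOf.mp htH
    simpa using this
  · have h1 : t1 * t1 = 1 := by
      nth_rewrite 1 [← heq]
      rw [inv_mul_cancel]
    have := congrArg (Subtype.val) h1
    simpa using this

private lemma forward_dir {G : Type*} [Group G] (H : Subgroup G)
    (hG : IsPerfectCode H) : IsPerfectCode (H.subgroupOf (Subgroup.normalizer (H : Set G))) := by
  obtain ⟨T, hTinv, hT⟩ := hG
  have hmemT : ∀ x : G, x ∈ T ↔ x⁻¹ ∈ T := by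
    intro x
    nth_rewrite 1 [← hTinv]
    exact Set.mem_inv
  set N := Subgroup.normalizer (H : Set G)
  refine ⟨{t : N | (t : G) ∈ T}, ?_, ?_⟩
  · ext t
    simp only [Set.mem_inv, Set.mem_setOf_eq]
    rw [show ((t⁻¹ : N) : G) = ((t : G))⁻¹ from rfl, ← hmemT]
  · intro g1
    obtain ⟨t, ⟨htT, htH⟩, huniq⟩ := hT (g1 : G)
    have htN : t ∈ N := by
      have h1 : (t⁻¹ * g1 : G) ∈ N := Subgroup.le_normalizer htH
      have h2 : t = (g1 : G) * (t⁻¹ * (g1 : G))⁻¹ := by group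
      rw [h2]
      exact mul_mem g1.2 (inv_mem h1)
    refine ⟨⟨t, htN⟩, ⟨htT, ?_⟩, ?_⟩
    · rw [Subgroup.mem_subgroupOf]
      simpa using htH
    · rintro t' ⟨ht'S, ht'H⟩
      have : (t' : G) = t := by
        apply huniq
        refine ⟨ht'S, ?_⟩
        have := Subgroup.mem_subgroupOf.mp ht'H
        simpa using this
      exact Subtype.ext this



private def coE {G : Type*} [Group G] (H : Subgroup G) (C C' : G ⧸ H) : Prop :=
  ∃ x : G, ∃ h ∈ H, (x : G ⧸ H) = C ∧ ((h * x : G) : G ⧸ H) = C'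

private def coR {G : Type*} [Group G] (H : Subgroup G) (C C' : G ⧸ H) : Prop :=
  ∃ x : G, (x : G ⧸ H) = C ∧ ((x⁻¹ : G) : G ⧸ H) = C'

private def coP {G : Type*} [Group G] (H : Subgroup G) (C : G ⧸ H) : Prop :=
  ∃ t : G, (t : G ⧸ H) = C ∧ t * t = 1

section rels
variable {G : Type*} [Group G] (H : Subgroup G)

private lemma coE_refl (C : G ⧸ H) : coE H C C := by
  obtain ⟨x, rfl⟩ := QuotientGroup.mk_surjective C
  exact ⟨x, 1, one_mem H, rfl, by rw [one_mul]⟩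

private lemma coE_symm (C C' : G ⧸ H) (h : coE H C C') : coE H C' C := by
  obtain ⟨x, h1, hh1, hx, hx'⟩ := h
  refine ⟨h1 * x, h1⁻¹, inv_mem hh1, hx', ?_⟩
  rw [show h1⁻¹ * (h1 * x) = x by group]
  exact hx

private lemma coR_symm (C C' : G ⧸ H) (h : coR H C C') : coR H C' C := by
  obtain ⟨x, hx, hx'⟩ := h
  exact ⟨x⁻¹, hx', by rw [inv_inv]; exact hx⟩

private lemma coRE_compat (a b c : G ⧸ H) (hab : coR H a b) (hbc : coE H b c) : coR H a c := by
  obtain ⟨x, hx, hxb⟩ := hab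
  obtain ⟨u, h, hh, hub, huc⟩ := hbc
  -- u ∈ x⁻¹ H : u = x⁻¹ * k with k = x * u ∈ H
  have hk : x * u ∈ H := by
    have h0 := QuotientGroup.eq.mp (hxb.trans hub.symm)
    rwa [inv_inv] at h0
  refine ⟨x * h⁻¹, ?_, ?_⟩
  · rw [QuotientGroup.mk_mul_of_mem x (inv_mem hh)]
    exact hx
  · rw [show (x * h⁻¹)⁻¹ = (h * u) * (x * u)⁻¹ by group,
      QuotientGroup.mk_mul_of_mem (h * u) (inv_mem hk)]
    exact huc

private lemma coR_coh (a b c : G ⧸ H) (hab : coR H a b) (hac : coR H a c) : coE H b c := by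
  obtain ⟨x, hx, hxb⟩ := hab
  obtain ⟨y, hy, hyc⟩ := hac
  have hk : x⁻¹ * y ∈ H := QuotientGroup.eq.mp (hx.trans hy.symm)
  refine ⟨x⁻¹, (x⁻¹ * y)⁻¹, inv_mem hk, hxb, ?_⟩
  rw [show (x⁻¹ * y)⁻¹ * x⁻¹ = y⁻¹ by group]
  exact hyc

open MulAction

private lemma coE_orbit (g : G) (C : G ⧸ H) :
    coE H (g : G ⧸ H) C ↔ C ∈ orbit H ((g : G) : G ⧸ H) := by
  constructor
  · rintro ⟨x, h, hh, hx, hx'⟩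
    have hk : g⁻¹ * x ∈ H := QuotientGroup.eq.mp hx.symm
    refine ⟨⟨h, hh⟩, ?_⟩
    show ((h * g : G) : G ⧸ H) = C
    rw [show (h * g : G) = (h * x) * (g⁻¹ * x)⁻¹ by group,
      QuotientGroup.mk_mul_of_mem (h * x) (inv_mem hk)]
    exact hx'
  · rintro ⟨⟨h, hh⟩, rfl⟩
    exact ⟨g, h, hh, rfl, rfl⟩

private lemma coR_orbit (g : G) (C : G ⧸ H) :
    coR H (g : G ⧸ H) C ↔ C ∈ orbit H ((g⁻¹ : G) : G ⧸ H) := by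
  constructor
  · rintro ⟨x, hx, hx'⟩
    have hk : g⁻¹ * x ∈ H := QuotientGroup.eq.mp hx.symm
    refine ⟨⟨(g⁻¹ * x)⁻¹, inv_mem hk⟩, ?_⟩
    show (((g⁻¹ * x)⁻¹ * g⁻¹ : G) : G ⧸ H) = C
    rw [show ((g⁻¹ * x)⁻¹ * g⁻¹ : G) = x⁻¹ by group]
    exact hx'
  · rintro ⟨⟨h, hh⟩, rfl⟩
    refine ⟨g * h⁻¹, ?_, ?_⟩
    · rw [QuotientGroup.mk_mul_of_mem g (inv_mem hh)]
    · show (((g * h⁻¹)⁻¹ : G) : G ⧸ H) = ((h * g⁻¹ : G) : G ⧸ H)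
      rw [show ((g * h⁻¹)⁻¹ : G) = h * g⁻¹ by group]

private lemma orbit_card_mul [Finite G] (b : G ⧸ H) :
    Nat.card (orbit H b) * Nat.card (stabilizer H b) = Nat.card H := by
  rw [Nat.card_congr (orbitEquivQuotientStabilizer H b)]
  exact (Subgroup.card_eq_card_quotient_mul_card_subgroup _).symm

end rels

open MulAction in
private lemma hard_dir {G : Type*} [Group G] [Finite G] (H : Subgroup G) (h2 : IsPGroup 2 H)
    (hstep : ∀ g : G, g ∈ Subgroup.normalizer (H : Set G) → g * g ∈ H → ∃ t : G, t⁻¹ * g ∈ H ∧ t * t = 1) :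
    IsPerfectCode H := by
  classical
  haveI : Fact (Nat.Prime 2) := ⟨Nat.prime_two⟩
  obtain ⟨n, hn⟩ := IsPGroup.iff_card.mp h2
  letI : Fintype (G ⧸ H) := Fintype.ofFinite _
  have cardE : ∀ g : G, (Finset.univ.filter (coE H (g : G ⧸ H))).card
      = Nat.card (orbit H ((g : G) : G ⧸ H)) := by
    intro g
    rw [← Fintype.card_subtype, ← Nat.card_eq_fintype_card]
    exact Nat.card_congr (Equiv.subtypeEquivRight (coE_orbit H g))
  have cardR : ∀ g : G, (Finset.univ.filter (coR H (g : G ⧸ H))).card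
      = Nat.card (orbit H ((g⁻¹ : G) : G ⧸ H)) := by
    intro g
    rw [← Fintype.card_subtype, ← Nat.card_eq_fintype_card]
    exact Nat.card_congr (Equiv.subtypeEquivRight (coR_orbit H g))
  have orbEq : ∀ g : G, Nat.card (orbit H ((g : G) : G ⧸ H))
      = Nat.card (orbit H ((g⁻¹ : G) : G ⧸ H)) := by
    intro g
    have h1 := orbit_card_mul H ((g : G) : G ⧸ H)
    have h2' := orbit_card_mul H ((g⁻¹ : G) : G ⧸ H)
    rw [stab_card_eq H g] at h2'
    exact Nat.eq_of_mul_eq_mul_right Nat.card_pos (h1.trans h2'.symm)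
  have hcard : ∀ a ∈ Finset.univ, (Finset.univ.filter (coE H a)).card
      = (Finset.univ.filter (coR H a)).card := by
    intro a _
    obtain ⟨g, rfl⟩ := QuotientGroup.mk_surjective a
    rw [cardE g, cardR g, orbEq g]
  have hpar : ∀ a ∈ Finset.univ, coR H a a →
      Even (Finset.univ.filter (coE H a)).card ∨ coP H a := by
    intro a _ hR
    obtain ⟨x, hx1, hx2⟩ := hR
    by_cases hev : Even ((Finset.univ.filter (coE H a)).card)
    · exact Or.inl hev
    right
    subst hx1
    have hfc : (Finset.univ.filter (coE H ((x : G) : G ⧸ H))).card = 1 := by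
      have hdvd : (Finset.univ.filter (coE H ((x : G) : G ⧸ H))).card ∣ 2 ^ n := by
        rw [cardE x, ← hn]
        exact ⟨Nat.card (stabilizer H ((x : G) : G ⧸ H)), (orbit_card_mul H _).symm⟩
      obtain ⟨i, _, hieq⟩ := (Nat.dvd_prime_pow Nat.prime_two).mp hdvd
      rcases Nat.eq_zero_or_pos i with rfl | hipos
      · simpa using hieq
      · exfalso
        apply hev
        rw [hieq]
        exact Nat.even_pow.mpr ⟨even_two, hipos.ne'⟩
    have hcard1 : Nat.card (orbit H ((x : G) : G ⧸ H)) = 1 := (cardE x).symm.trans hfc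
    have hsub : ∀ h : H, (((h : G) * x : G) : G ⧸ H) = ((x : G) : G ⧸ H) := by
      haveI hss : Subsingleton (orbit H ((x : G) : G ⧸ H)) :=
        (Nat.card_eq_one_iff_unique.mp hcard1).1
      intro h
      have e1 : (⟨h • ((x : G) : G ⧸ H), mem_orbit _ h⟩ : orbit H ((x : G) : G ⧸ H))
          = ⟨((x : G) : G ⧸ H), mem_orbit_self _⟩ := Subsingleton.elim _ _
      exact congrArg Subtype.val e1
    have hconj : ∀ h ∈ H, x⁻¹ * h * x ∈ H := by
      intro h hh
      have e1 := hsub ⟨h⁻¹, inv_mem hh⟩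
      have e2 := QuotientGroup.eq.mp e1
      rwa [show (h⁻¹ * x)⁻¹ * x = x⁻¹ * h * x by group] at e2
    have hxN : x ∈ Subgroup.normalizer (H : Set G) := by
      rw [Subgroup.mem_normalizer_iff]
      have hinj : Function.Injective (fun h : H => (⟨x⁻¹ * h * x, hconj h h.2⟩ : H)) := by
        intro h1 h2 hh
        have e1 := congrArg (fun z : H => (z : G)) hh
        simp only at e1
        exact Subtype.ext (mul_left_cancel (mul_right_cancel e1))
      have hsurj := Finite.injective_iff_surjective.mp hinj
      intro h
      constructor
      · intro hh
        obtain ⟨h', hh'⟩ := hsurj ⟨h, hh⟩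
        have e1 := congrArg (fun z : H => (z : G)) hh'
        simp only at e1
        have e2 : (h' : G) = x * h * x⁻¹ := by rw [← e1]; group
        rw [← e2]
        exact h'.2
      · intro hh
        have e1 := hconj _ hh
        rwa [show x⁻¹ * (x * h * x⁻¹) * x = h by group] at e1
    have hxx : x * x ∈ H := by
      have e1 := QuotientGroup.eq.mp hx2
      rwa [inv_inv] at e1
    obtain ⟨t, ht1, ht2⟩ := hstep x hxN hxx
    exact ⟨t, QuotientGroup.eq.mpr ht1, ht2⟩
  obtain ⟨σ, hσ⟩ := exists_matching (coE H) (coR H) (coP H) (coE_refl H) (coE_symm H)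
    (coR_symm H) (coRE_compat H) (coR_coh H) Finset.univ hcard hpar
  have hσ' : ∀ C, σ (σ C) = C ∧ coR H C (σ C) ∧ (σ C = C → coP H C) := by
    intro C
    have := hσ C (Finset.mem_univ C)
    tauto
  have hxc : ∀ C : G ⧸ H, ∃ z : G,
      (z : G ⧸ H) = C ∧ ((z⁻¹ : G) : G ⧸ H) = σ C ∧ (σ C = C → z * z = 1) := by
    intro C
    by_cases hfix : σ C = C
    · obtain ⟨t, ht1, ht2⟩ := (hσ' C).2.2 hfix
      refine ⟨t, ht1, ?_, fun _ => ht2⟩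
      rw [show (t⁻¹ : G) = t from inv_eq_of_mul_eq_one_right ht2, hfix]
      exact ht1
    · obtain ⟨z, h1', h2'⟩ := (hσ' C).2.1
      exact ⟨z, h1', h2', fun h => absurd h hfix⟩
  choose y hy1 hy2 hy3 using hxc
  letI : LinearOrder (G ⧸ H) :=
    LinearOrder.lift' (fun C => (Fintype.equivFin (G ⧸ H) C : ℕ))
      (fun a b hab => (Fintype.equivFin (G ⧸ H)).injective (Fin.val_injective hab))
  set c : G ⧸ H → G := fun C => if C ≤ σ C then y C else (y (σ C))⁻¹ with hcdef
  have key1 : ∀ C, ((c C : G) : G ⧸ H) = C := by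
    intro C
    show (((if C ≤ σ C then y C else (y (σ C))⁻¹ : G)) : G ⧸ H) = C
    by_cases h : C ≤ σ C
    · rw [if_pos h]
      exact hy1 C
    · rw [if_neg h, hy2 (σ C), (hσ' C).1]
  have key2 : ∀ C, c (σ C) = (c C)⁻¹ := by
    intro C
    by_cases hfix : σ C = C
    · rw [hfix]
      have hcc : c C = y C := if_pos (le_of_eq hfix.symm)
      apply eq_inv_of_mul_eq_one_left
      rw [hcc]
      exact hy3 C hfix
    · rcases lt_or_gt_of_ne (fun h : C = σ C => hfix h.symm) with hlt | hgt
      · have h1 : c C = y C := if_pos hlt.le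
        have h2 : c (σ C) = (y C)⁻¹ := by
          show (if σ C ≤ σ (σ C) then y (σ C) else (y (σ (σ C)))⁻¹) = (y C)⁻¹
          rw [(hσ' C).1, if_neg (not_le.mpr hlt)]
        rw [h1, h2]
      · have h1 : c C = (y (σ C))⁻¹ := if_neg (not_le.mpr hgt)
        have h2 : c (σ C) = y (σ C) := by
          show (if σ C ≤ σ (σ C) then y (σ C) else (y (σ (σ C)))⁻¹) = y (σ C)
          rw [(hσ' C).1, if_pos hgt.le]
        rw [h1, h2, inv_inv]
  refine ⟨Set.range c, ?_, ?_⟩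
  · ext z
    rw [Set.mem_inv]
    constructor
    · rintro ⟨C, hC⟩
      exact ⟨σ C, by rw [key2, hC, inv_inv]⟩
    · rintro ⟨C, rfl⟩
      exact ⟨σ C, key2 C⟩
  · intro g
    refine ⟨c ((g : G) : G ⧸ H), ⟨⟨_, rfl⟩, ?_⟩, ?_⟩
    · exact QuotientGroup.eq.mp (key1 ((g : G) : G ⧸ H))
    · rintro t' ⟨⟨C, rfl⟩, ht'⟩
      have hCg : C = ((g : G) : G ⧸ H) := by
        rw [← key1 C]
        exact QuotientGroup.eq.mpr ht'
      rw [hCg]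


theorem perfectCode_iff_perfectCode_normalizer_of_two_group {G : Type*} [Group G] [Finite G]
    (H : Subgroup G) (h2 : IsPGroup 2 H) :
    IsPerfectCode H ↔ IsPerfectCode (H.subgroupOf (Subgroup.normalizer (H : Set G))) := by
  constructor
  · exact fun h => forward_dir H h
  · exact fun h => hard_dir H h2 (step_sq H h)
end

section
/- Let G be a finite group and H a 2-subgroup of G. Then H is a perfect code of G if and only if for every x ∈ N_G(H) with x² ∈ H, there exists h ∈ H such that (xh)² = 1. -/
namespace PerfectCodeAux

open QuotientGroup Set

set_option linter.unusedSectionVars false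

variable {G : Type*} [Group G] [Finite G] {H : Subgroup G}

variable (H) in
/-- The set of left cosets contained in the double coset `HyH`. -/
def cosetsOf (y : G) : Set (G ⧸ H) := {C | ∃ h ∈ H, C = ((h * y : G) : G ⧸ H)}

lemma mk_mem_cosetsOf (y : G) : ((y : G) : G ⧸ H) ∈ cosetsOf H y :=
  ⟨1, H.one_mem, by rw [one_mul]⟩

lemma mem_cosetsOf {z y : G} :
    ((z : G) : G ⧸ H) ∈ cosetsOf H y ↔ ∃ h₁ ∈ H, ∃ h₂ ∈ H, z = h₁ * y * h₂ := by
  constructor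
  · rintro ⟨h, hh, hz⟩
    have hmem : z⁻¹ * (h * y) ∈ H := (QuotientGroup.eq).mp hz
    refine ⟨h, hh, (z⁻¹ * (h * y))⁻¹, H.inv_mem hmem, ?_⟩
    group
  · rintro ⟨h₁, hh₁, h₂, hh₂, rfl⟩
    exact ⟨h₁, hh₁, QuotientGroup.mk_mul_of_mem (h₁ * y) hh₂⟩

lemma cosetsOf_eq_of_mem {z y : G} (hz : ((z : G) : G ⧸ H) ∈ cosetsOf H y) :
    cosetsOf H z = cosetsOf H y := by
  obtain ⟨h₁, hh₁, h₂, hh₂, rfl⟩ := mem_cosetsOf.mp hz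
  ext C
  constructor
  · rintro ⟨k, hk, rfl⟩
    refine ⟨k * h₁, H.mul_mem hk hh₁, ?_⟩
    rw [show k * (h₁ * y * h₂) = (k * h₁ * y) * h₂ by group,
      QuotientGroup.mk_mul_of_mem _ hh₂]
  · rintro ⟨k, hk, rfl⟩
    refine ⟨k * h₁⁻¹, H.mul_mem hk (H.inv_mem hh₁), ?_⟩
    rw [show k * h₁⁻¹ * (h₁ * y * h₂) = (k * y) * h₂ by group,
      QuotientGroup.mk_mul_of_mem _ hh₂]

lemma mem_cosetsOf_iff_eq {z y : G} :
    ((z : G) : G ⧸ H) ∈ cosetsOf H y ↔ cosetsOf H z = cosetsOf H y :=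
  ⟨cosetsOf_eq_of_mem, fun h => by rw [← h]; exact mk_mem_cosetsOf z⟩

lemma inv_mem_cosetsOf {z y : G} (hz : ((z : G) : G ⧸ H) ∈ cosetsOf H y) :
    ((z⁻¹ : G) : G ⧸ H) ∈ cosetsOf H y⁻¹ := by
  obtain ⟨h₁, hh₁, h₂, hh₂, rfl⟩ := mem_cosetsOf.mp hz
  exact mem_cosetsOf.mpr ⟨h₂⁻¹, H.inv_mem hh₂, h₁⁻¹, H.inv_mem hh₁, by group⟩

lemma cosetsOf_inv_congr {z y : G} (h : cosetsOf H z = cosetsOf H y) :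
    cosetsOf H z⁻¹ = cosetsOf H y⁻¹ := by
  have hz : ((z : G) : G ⧸ H) ∈ cosetsOf H y := by
    rw [← h]; exact mk_mem_cosetsOf z
  exact cosetsOf_eq_of_mem (inv_mem_cosetsOf hz)

lemma cosetsOf_of_normalizer {x : G} (hx : x ∈ (Subgroup.normalizer (H : Set G))) :
    cosetsOf H x = {((x : G) : G ⧸ H)} := by
  ext C
  simp only [Set.mem_singleton_iff]
  constructor
  · rintro ⟨h, hh, rfl⟩
    rw [QuotientGroup.eq]
    have h1 : x⁻¹ * h⁻¹ * (x⁻¹)⁻¹ ∈ H :=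
      (Subgroup.mem_normalizer_iff.mp ((Subgroup.normalizer (H : Set G)).inv_mem hx) h⁻¹).mp (H.inv_mem hh)
    rw [show (h * x)⁻¹ * x = x⁻¹ * h⁻¹ * (x⁻¹)⁻¹ by group]
    exact h1
  · rintro rfl; exact mk_mem_cosetsOf x


variable (H) in
/-- The conjugate subgroup `yHy⁻¹`. -/
def conjSub (y : G) : Subgroup G := H.map (MulAut.conj y).toMonoidHom

lemma mem_conjSub {y z : G} : z ∈ conjSub H y ↔ ∃ h ∈ H, y * h * y⁻¹ = z := by
  simp [conjSub, Subgroup.mem_map, MulAut.conj_apply]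

lemma card_cosetsOf (y : G) :
    (cosetsOf H y).ncard = ((conjSub H y).subgroupOf H).index := by
  set K' : Subgroup ↥H := (conjSub H y).subgroupOf H with hK'
  set f : ↥H → G ⧸ H := fun a => (((a : G) * y : G) : G ⧸ H) with hf
  have key : ∀ a b : ↥H, (QuotientGroup.leftRel K') a b ↔ f a = f b := by
    intro a b
    rw [QuotientGroup.leftRel_apply]
    constructor
    · intro hab
      have h1 : ((↑(a⁻¹ * b) : G)) ∈ conjSub H y := Subgroup.mem_subgroupOf.mp hab
      obtain ⟨h, hh, hhe⟩ := mem_conjSub.mp h1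
      have h2 : (a : G)⁻¹ * (b : G) = y * h * y⁻¹ := by
        rw [hhe]; push_cast; ring_nf
      show (((a : G) * y : G) : G ⧸ H) = (((b : G) * y : G) : G ⧸ H)
      rw [QuotientGroup.eq]
      rw [show ((a : G) * y)⁻¹ * ((b : G) * y) = y⁻¹ * ((a : G)⁻¹ * (b : G)) * y by group,
        h2, show y⁻¹ * (y * h * y⁻¹) * y = h by group]
      exact hh
    · intro hab
      have h2 : ((a : G) * y)⁻¹ * ((b : G) * y) ∈ H := (QuotientGroup.eq).mp hab
      refine Subgroup.mem_subgroupOf.mpr (mem_conjSub.mpr ⟨((a : G) * y)⁻¹ * ((b : G) * y), h2, ?_⟩)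
      push_cast
      group
  have e1 : (↥H ⧸ K') ≃ Quotient (Setoid.ker f) :=
    Quotient.congrRight (fun a b => (key a b))
  have e2 : Quotient (Setoid.ker f) ≃ Set.range f := Setoid.quotientKerEquivRange f
  have hrange : Set.range f = cosetsOf H y := by
    ext C
    constructor
    · rintro ⟨a, rfl⟩; exact ⟨a, a.2, rfl⟩
    · rintro ⟨h, hh, rfl⟩; exact ⟨⟨h, hh⟩, rfl⟩
  calc (cosetsOf H y).ncard = Nat.card (cosetsOf H y) := (Nat.card_coe_set_eq _).symm
    _ = Nat.card (↥H ⧸ K') := by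
        rw [← hrange]
        exact (Nat.card_congr (e1.trans e2)).symm
    _ = K'.index := rfl

lemma ncard_cosetsOf_dvd (y : G) : (cosetsOf H y).ncard ∣ Nat.card ↥H := by
  rw [card_cosetsOf]; exact Subgroup.index_dvd_card _

lemma conjSub_subgroupOf_inf (y : G) :
    (conjSub H y).subgroupOf H = (conjSub H y ⊓ H).subgroupOf H := by
  ext a
  simp [Subgroup.mem_subgroupOf, a.2]

lemma card_conjSub_inf (y : G) :
    Nat.card ↥(conjSub H y ⊓ H) = Nat.card ↥(conjSub H y⁻¹ ⊓ H) := by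
  have hinj : Function.Injective ((MulAut.conj y⁻¹).toMonoidHom : G →* G) :=
    (MulAut.conj y⁻¹).injective
  have hcomp : ((MulAut.conj y⁻¹).toMonoidHom : G →* G).comp (MulAut.conj y).toMonoidHom
      = MonoidHom.id G := by
    ext g
    simp only [MonoidHom.coe_comp, Function.comp_apply, MulEquiv.coe_toMonoidHom, MulAut.conj_apply, MonoidHom.id_apply]
    group
  have hmap : (conjSub H y ⊓ H).map (MulAut.conj y⁻¹).toMonoidHom
      = H ⊓ conjSub H y⁻¹ := by
    rw [Subgroup.map_inf _ _ _ hinj]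
    congr 1
    · show (H.map (MulAut.conj y).toMonoidHom).map (MulAut.conj y⁻¹).toMonoidHom = H
      rw [Subgroup.map_map, hcomp, Subgroup.map_id]
  calc Nat.card ↥(conjSub H y ⊓ H)
      = Nat.card ↥((conjSub H y ⊓ H).map (MulAut.conj y⁻¹).toMonoidHom) :=
        Nat.card_congr (Subgroup.equivMapOfInjective _ _ hinj).toEquiv
    _ = Nat.card ↥(H ⊓ conjSub H y⁻¹) := by rw [hmap]
    _ = Nat.card ↥(conjSub H y⁻¹ ⊓ H) := by rw [inf_comm]

lemma ncard_cosetsOf_inv (y : G) :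
    (cosetsOf H y⁻¹).ncard = (cosetsOf H y).ncard := by
  rw [card_cosetsOf, card_cosetsOf]
  have e : ∀ w : G, ((conjSub H w).subgroupOf H).index * Nat.card ↥(conjSub H w ⊓ H)
      = Nat.card ↥H := by
    intro w
    rw [conjSub_subgroupOf_inf,
      ← Nat.card_congr (Subgroup.subgroupOfEquivOfLe
        (inf_le_right : conjSub H w ⊓ H ≤ H)).toEquiv]
    exact Subgroup.index_mul_card _
  have h1 := e y⁻¹
  have h2 := e y
  rw [← card_conjSub_inf y] at h1
  have hpos : 0 < Nat.card ↥(conjSub H y ⊓ H) := Nat.card_pos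
  exact Nat.eq_of_mul_eq_mul_right hpos (h1.trans h2.symm)

lemma normalizer_of_singleton {y : G} (h : cosetsOf H y = {((y : G) : G ⧸ H)}) :
    y ∈ (Subgroup.normalizer (H : Set G)) := by
  have key : ∀ k, k ∈ H → y⁻¹ * k * y ∈ H := by
    intro k hk
    have hmem : (((k * y : G)) : G ⧸ H) = ((y : G) : G ⧸ H) := by
      have : (((k * y : G)) : G ⧸ H) ∈ cosetsOf H y := ⟨k, hk, rfl⟩
      rwa [h, Set.mem_singleton_iff] at this
    have h2 : (k * y)⁻¹ * y ∈ H := (QuotientGroup.eq).mp hmem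
    have h3 : y⁻¹ * k⁻¹ * y ∈ H := by
      rwa [show y⁻¹ * k⁻¹ * y = (k * y)⁻¹ * y by group]
    have h4 := H.inv_mem h3
    rwa [show (y⁻¹ * k⁻¹ * y)⁻¹ = y⁻¹ * k * y by group] at h4
  have hφ : Function.Injective (fun k : ↥H => (⟨y⁻¹ * k * y, key k k.2⟩ : ↥H)) := by
    intro a b hab
    have : y⁻¹ * (a : G) * y = y⁻¹ * (b : G) * y := congrArg Subtype.val hab
    have : (a : G) = (b : G) := by
      have := congrArg (fun w => y * w * y⁻¹) this
      simpa [mul_assoc] using this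
    exact Subtype.ext this
  have hφs := Finite.injective_iff_surjective.mp hφ
  rw [Subgroup.mem_normalizer_iff]
  intro k
  constructor
  · intro hk
    obtain ⟨⟨a, ha⟩, hae⟩ := hφs ⟨k, hk⟩
    have h5 : y⁻¹ * a * y = k := congrArg Subtype.val hae
    rw [← h5, show y * (y⁻¹ * a * y) * y⁻¹ = a by group]
    exact ha
  · intro hk
    have := key _ hk
    rwa [show y⁻¹ * (y * k * y⁻¹) * y = k by group] at this


lemma cos_inv_eq_iff {z y : G} :
    cosetsOf H z = cosetsOf H y⁻¹ ↔ cosetsOf H z⁻¹ = cosetsOf H y := by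
  constructor
  · intro h
    have := cosetsOf_inv_congr h
    rwa [inv_inv] at this
  · intro h
    have := cosetsOf_inv_congr h
    rwa [inv_inv] at this

variable (H) in
/-- The balance invariant for the inductive construction. -/
def Bal (S : Set (G ⧸ H)) : Prop :=
  ∀ y : G, (S ∩ cosetsOf H y⁻¹).ncard = (S ∩ cosetsOf H y).ncard ∧
    (cosetsOf H y⁻¹ = cosetsOf H y → Even ((S ∩ cosetsOf H y).ncard))

lemma bal_erase {S : Set (G ⧸ H)} {z : G} (hS : Bal H S)
    (hz : ((z : G) : G ⧸ H) ∈ S) (hz' : ((z⁻¹ : G) : G ⧸ H) ∈ S)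
    (hne : ((z : G) : G ⧸ H) ≠ ((z⁻¹ : G) : G ⧸ H)) :
    Bal H (S \ {((z : G) : G ⧸ H), ((z⁻¹ : G) : G ⧸ H)}) := by
  set a : G ⧸ H := ((z : G) : G ⧸ H) with hadef
  set b : G ⧸ H := ((z⁻¹ : G) : G ⧸ H) with hbdef
  intro y
  obtain ⟨heq, hev⟩ := hS y
  have hsplit : ∀ w : G, (S \ {a, b}) ∩ cosetsOf H w
      = (S ∩ cosetsOf H w) \ ({a, b} ∩ cosetsOf H w) := by
    intro w
    ext C
    simp only [Set.mem_diff, Set.mem_inter_iff, Set.mem_insert_iff, Set.mem_singleton_iff]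
    tauto
  have hsub : ∀ w : G, ({a, b} ∩ cosetsOf H w) ⊆ S ∩ cosetsOf H w := by
    intro w C hC
    obtain ⟨h1, h2⟩ := hC
    refine ⟨?_, h2⟩
    rcases h1 with rfl | h1
    · exact hz
    · rw [Set.mem_singleton_iff] at h1; rw [h1]; exact hz'
  have hncard : ∀ w : G, ((S \ {a, b}) ∩ cosetsOf H w).ncard
      = (S ∩ cosetsOf H w).ncard - ({a, b} ∩ cosetsOf H w).ncard := by
    intro w
    rw [hsplit w, Set.ncard_diff (hsub w)]
  have ha : ∀ w : G, a ∈ cosetsOf H w ↔ cosetsOf H z = cosetsOf H w :=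
    fun w => mem_cosetsOf_iff_eq
  have hb : ∀ w : G, b ∈ cosetsOf H w ↔ cosetsOf H z⁻¹ = cosetsOf H w :=
    fun w => mem_cosetsOf_iff_eq
  by_cases hp : cosetsOf H z = cosetsOf H y <;>
    by_cases hq : cosetsOf H z⁻¹ = cosetsOf H y
  · -- both in cos y; both in cos y⁻¹
    have hp' : cosetsOf H z⁻¹ = cosetsOf H y⁻¹ := cosetsOf_inv_congr hp
    have hq' : cosetsOf H z = cosetsOf H y⁻¹ := cos_inv_eq_iff.mpr hq
    have hcy : {a, b} ∩ cosetsOf H y = {a, b} :=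
      Set.inter_eq_left.mpr (Set.pair_subset ((ha y).mpr hp) ((hb y).mpr hq))
    have hcyi : {a, b} ∩ cosetsOf H y⁻¹ = {a, b} :=
      Set.inter_eq_left.mpr (Set.pair_subset ((ha y⁻¹).mpr hq') ((hb y⁻¹).mpr hp'))
    have h2 : ({a, b} : Set (G ⧸ H)).ncard = 2 := Set.ncard_pair hne
    have hle : 2 ≤ (S ∩ cosetsOf H y).ncard := by
      rw [← h2]
      exact Set.ncard_le_ncard (by rw [← hcy]; exact hsub y) (Set.toFinite _)
    constructor
    · rw [hncard, hncard, hcy, hcyi, heq]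
    · intro hyy
      rw [hncard, hcy, h2, Nat.even_sub hle]
      simp [hev hyy]
  · -- a ∈ cos y, b ∉ cos y; b ∈ cos y⁻¹, a ∉ cos y⁻¹
    have hp' : cosetsOf H z⁻¹ = cosetsOf H y⁻¹ := cosetsOf_inv_congr hp
    have hq' : ¬ cosetsOf H z = cosetsOf H y⁻¹ := fun h => hq (cos_inv_eq_iff.mp h)
    have hcy : {a, b} ∩ cosetsOf H y = {a} := by
      ext C
      simp only [Set.mem_inter_iff, Set.mem_insert_iff, Set.mem_singleton_iff]
      constructor
      · rintro ⟨rfl | rfl, hC⟩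
        · rfl
        · exact absurd ((hb y).mp hC) hq
      · rintro rfl
        exact ⟨Or.inl rfl, (ha y).mpr hp⟩
    have hcyi : {a, b} ∩ cosetsOf H y⁻¹ = {b} := by
      ext C
      simp only [Set.mem_inter_iff, Set.mem_insert_iff, Set.mem_singleton_iff]
      constructor
      · rintro ⟨rfl | rfl, hC⟩
        · exact absurd ((ha y⁻¹).mp hC) hq'
        · rfl
      · rintro rfl
        exact ⟨Or.inr rfl, (hb y⁻¹).mpr hp'⟩
    constructor
    · rw [hncard, hncard, hcy, hcyi, heq, Set.ncard_singleton, Set.ncard_singleton]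
    · intro hyy
      exact absurd (hp'.trans hyy) hq
  · -- b ∈ cos y, a ∉ cos y; a ∈ cos y⁻¹, b ∉ cos y⁻¹
    have hq' : cosetsOf H z = cosetsOf H y⁻¹ := cos_inv_eq_iff.mpr hq
    have hp' : ¬ cosetsOf H z⁻¹ = cosetsOf H y⁻¹ := by
      intro h
      have := cosetsOf_inv_congr h
      rw [inv_inv, inv_inv] at this
      exact hp this
    have hcy : {a, b} ∩ cosetsOf H y = {b} := by
      ext C
      simp only [Set.mem_inter_iff, Set.mem_insert_iff, Set.mem_singleton_iff]
      constructor
      · rintro ⟨rfl | rfl, hC⟩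
        · exact absurd ((ha y).mp hC) hp
        · rfl
      · rintro rfl
        exact ⟨Or.inr rfl, (hb y).mpr hq⟩
    have hcyi : {a, b} ∩ cosetsOf H y⁻¹ = {a} := by
      ext C
      simp only [Set.mem_inter_iff, Set.mem_insert_iff, Set.mem_singleton_iff]
      constructor
      · rintro ⟨rfl | rfl, hC⟩
        · rfl
        · exact absurd ((hb y⁻¹).mp hC) hp'
      · rintro rfl
        exact ⟨Or.inl rfl, (ha y⁻¹).mpr hq'⟩
    constructor
    · rw [hncard, hncard, hcy, hcyi, heq, Set.ncard_singleton, Set.ncard_singleton]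
    · intro hyy
      exact absurd (hq'.trans hyy) hp
  · -- neither
    have hq' : ¬ cosetsOf H z = cosetsOf H y⁻¹ := fun h => hq (cos_inv_eq_iff.mp h)
    have hp' : ¬ cosetsOf H z⁻¹ = cosetsOf H y⁻¹ := by
      intro h
      have := cosetsOf_inv_congr h
      rw [inv_inv, inv_inv] at this
      exact hp this
    have hcy : {a, b} ∩ cosetsOf H y = ∅ := by
      ext C
      simp only [Set.mem_inter_iff, Set.mem_insert_iff, Set.mem_singleton_iff,
        Set.mem_empty_iff_false, iff_false, not_and]
      rintro (rfl | rfl)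
      · exact fun hC => hp ((ha y).mp hC)
      · exact fun hC => hq ((hb y).mp hC)
    have hcyi : {a, b} ∩ cosetsOf H y⁻¹ = ∅ := by
      ext C
      simp only [Set.mem_inter_iff, Set.mem_insert_iff, Set.mem_singleton_iff,
        Set.mem_empty_iff_false, iff_false, not_and]
      rintro (rfl | rfl)
      · exact fun hC => hq' ((ha y⁻¹).mp hC)
      · exact fun hC => hp' ((hb y⁻¹).mp hC)
    constructor
    · rw [hncard, hncard, hcy, hcyi, heq]
    · intro hyy
      rw [hncard, hcy, Set.ncard_empty, Nat.sub_zero]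
      exact hev hyy


lemma exists_pair {S : Set (G ⧸ H)} (hS : Bal H S) (hne : S.Nonempty) :
    ∃ z : G, ((z : G) : G ⧸ H) ∈ S ∧ ((z⁻¹ : G) : G ⧸ H) ∈ S ∧
      ((z : G) : G ⧸ H) ≠ ((z⁻¹ : G) : G ⧸ H) := by
  obtain ⟨C₀, hC₀⟩ := hne
  obtain ⟨x₀, rfl⟩ := QuotientGroup.mk_surjective C₀
  by_cases hself : cosetsOf H x₀⁻¹ = cosetsOf H x₀
  · obtain ⟨heq, hev⟩ := hS x₀
    have hx0mem : ((x₀ : G) : G ⧸ H) ∈ S ∩ cosetsOf H x₀ := ⟨hC₀, mk_mem_cosetsOf x₀⟩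
    have hpos : 0 < (S ∩ cosetsOf H x₀).ncard :=
      (Set.ncard_pos (Set.toFinite _)).mpr ⟨_, hx0mem⟩
    have h2 : 2 ≤ (S ∩ cosetsOf H x₀).ncard := by
      rcases hev hself with ⟨k, hk⟩; omega
    have hne2 : ((S ∩ cosetsOf H x₀) \ {((x₀ : G) : G ⧸ H)}).Nonempty := by
      rw [← Set.ncard_pos (Set.toFinite _), Set.ncard_diff_singleton_of_mem hx0mem]
      omega
    obtain ⟨C₁, ⟨hC₁S, hC₁cos⟩, hC₁ne⟩ := hne2
    rw [Set.mem_singleton_iff] at hC₁ne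
    obtain ⟨h, hh, rfl⟩ := hC₁cos
    have hxi : ((x₀⁻¹ : G) : G ⧸ H) ∈ cosetsOf H x₀ := by
      rw [← hself]; exact mk_mem_cosetsOf x₀⁻¹
    obtain ⟨h₁, hh₁, k, hk, hzeq⟩ := mem_cosetsOf.mp hxi
    refine ⟨h₁⁻¹ * x₀⁻¹ * h⁻¹, ?_, ?_, ?_⟩
    · have hz1 : ((h₁⁻¹ * x₀⁻¹ * h⁻¹ : G) : G ⧸ H) = ((x₀ : G) : G ⧸ H) := by
        rw [show h₁⁻¹ * x₀⁻¹ * h⁻¹ = x₀ * (k * h⁻¹) by rw [show x₀ * (k * h⁻¹)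
          = h₁⁻¹ * (h₁ * x₀ * k) * h⁻¹ by group, ← hzeq]]
        exact QuotientGroup.mk_mul_of_mem x₀ (H.mul_mem hk (H.inv_mem hh))
      rw [hz1]; exact hC₀
    · have hz2 : (((h₁⁻¹ * x₀⁻¹ * h⁻¹)⁻¹ : G) : G ⧸ H) = ((h * x₀ : G) : G ⧸ H) := by
        rw [show (h₁⁻¹ * x₀⁻¹ * h⁻¹)⁻¹ = (h * x₀) * h₁ by group]
        exact QuotientGroup.mk_mul_of_mem _ hh₁
      rw [hz2]; exact hC₁S
    · have hz1 : ((h₁⁻¹ * x₀⁻¹ * h⁻¹ : G) : G ⧸ H) = ((x₀ : G) : G ⧸ H) := by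
        rw [show h₁⁻¹ * x₀⁻¹ * h⁻¹ = x₀ * (k * h⁻¹) by rw [show x₀ * (k * h⁻¹)
          = h₁⁻¹ * (h₁ * x₀ * k) * h⁻¹ by group, ← hzeq]]
        exact QuotientGroup.mk_mul_of_mem x₀ (H.mul_mem hk (H.inv_mem hh))
      have hz2 : (((h₁⁻¹ * x₀⁻¹ * h⁻¹)⁻¹ : G) : G ⧸ H) = ((h * x₀ : G) : G ⧸ H) := by
        rw [show (h₁⁻¹ * x₀⁻¹ * h⁻¹)⁻¹ = (h * x₀) * h₁ by group]
        exact QuotientGroup.mk_mul_of_mem _ hh₁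
      rw [hz1, hz2]
      exact fun hcon => hC₁ne hcon.symm
  · obtain ⟨heq, _⟩ := hS x₀
    have hpos : 0 < (S ∩ cosetsOf H x₀⁻¹).ncard := by
      rw [heq]
      exact (Set.ncard_pos (Set.toFinite _)).mpr ⟨_, ⟨hC₀, mk_mem_cosetsOf x₀⟩⟩
    obtain ⟨C₁, hC₁S, hC₁cos⟩ := (Set.ncard_pos (Set.toFinite _)).mp hpos
    obtain ⟨h, hh, rfl⟩ := hC₁cos
    refine ⟨x₀ * h⁻¹, ?_, ?_, ?_⟩
    · rw [QuotientGroup.mk_mul_of_mem x₀ (H.inv_mem hh)]; exact hC₀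
    · rw [show (x₀ * h⁻¹)⁻¹ = h * x₀⁻¹ by group]; exact hC₁S
    · rw [QuotientGroup.mk_mul_of_mem x₀ (H.inv_mem hh),
        show (x₀ * h⁻¹)⁻¹ = h * x₀⁻¹ by group]
      intro hcon
      have : ((x₀ : G) : G ⧸ H) ∈ cosetsOf H x₀⁻¹ := by
        rw [hcon]; exact ⟨h, hh, rfl⟩
      exact hself (cosetsOf_eq_of_mem this).symm

lemma exists_partial : ∀ (n : ℕ) (S : Set (G ⧸ H)), S.ncard = n → Bal H S →
    ∃ t : G ⧸ H → G, (∀ C ∈ S, ((t C : G) : G ⧸ H) = C) ∧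
      ∀ C ∈ S, ∃ C' ∈ S, t C' = (t C)⁻¹ := by
  intro n
  induction n using Nat.strong_induction_on with
  | _ n ih =>
    intro S hn hS
    rcases S.eq_empty_or_nonempty with rfl | hne
    · exact ⟨fun C => C.out, by simp, by simp⟩
    · obtain ⟨z, hz, hz', hzne⟩ := exists_pair hS hne
      set a : G ⧸ H := ((z : G) : G ⧸ H) with hadef
      set b : G ⧸ H := ((z⁻¹ : G) : G ⧸ H) with hbdef
      have hlt : (S \ {a, b}).ncard < n := by
        rw [← hn]
        refine Set.ncard_lt_ncard ⟨Set.diff_subset, fun hsub => ?_⟩ (Set.toFinite _)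
        exact (hsub hz).2 (Or.inl rfl)
      obtain ⟨t', ht'1, ht'2⟩ := ih _ hlt (S \ {a, b}) rfl (bal_erase hS hz hz' hzne)
      classical
      refine ⟨fun C => if C = a then z else if C = b then z⁻¹ else t' C, ?_, ?_⟩
      · intro C hC
        dsimp only
        by_cases h1 : C = a
        · rw [if_pos h1]; exact h1.symm
        · by_cases h2 : C = b
          · rw [if_neg h1, if_pos h2]; exact h2.symm
          · rw [if_neg h1, if_neg h2]
            exact ht'1 C ⟨hC, by simp [h1, h2]⟩
      · intro C hC
        dsimp only
        by_cases h1 : C = a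
        · refine ⟨b, hz', ?_⟩
          rw [if_neg (Ne.symm hzne), if_pos rfl, if_pos h1]
        · by_cases h2 : C = b
          · refine ⟨a, hz, ?_⟩
            rw [if_pos rfl, if_neg h1, if_pos h2, inv_inv]
          · obtain ⟨C', hC'S, hC'⟩ := ht'2 C ⟨hC, by simp [h1, h2]⟩
            have hC'ne : C' ≠ a ∧ C' ≠ b := by
              have := hC'S.2
              simp only [Set.mem_insert_iff, Set.mem_singleton_iff] at this
              tauto
            refine ⟨C', hC'S.1, ?_⟩
            rw [if_neg hC'ne.1, if_neg hC'ne.2, if_neg h1, if_neg h2]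
            exact hC'


lemma exists_transversal (hp2 : IsPGroup 2 ↥H)
    (hyp : ∀ x ∈ (Subgroup.normalizer (H : Set G)), x ^ 2 ∈ H → ∃ h ∈ H, (x * h) ^ 2 = 1) :
    ∃ t : G ⧸ H → G, (∀ C, ((t C : G) : G ⧸ H) = C) ∧ ∀ C, ∃ C', t C' = (t C)⁻¹ := by
  classical
  set A : Set (G ⧸ H) := {C | ∃ x : G, ((x : G) : G ⧸ H) = C ∧ x ∈ (Subgroup.normalizer (H : Set G)) ∧ x ^ 2 ∈ H}
    with hA
  have hAw : ∀ C ∈ A, ∃ w : G, ((w : G) : G ⧸ H) = C ∧ w⁻¹ = w := by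
    rintro C ⟨x, rfl, hxN, hx2⟩
    obtain ⟨h, hh, hw⟩ := hyp x hxN hx2
    refine ⟨x * h, QuotientGroup.mk_mul_of_mem x hh, ?_⟩
    have hmul : (x * h) * (x * h) = 1 := by rw [← sq]; exact hw
    exact inv_eq_of_mul_eq_one_right hmul
  have hAcos : ∀ y : G, ∀ C ∈ A, C ∈ cosetsOf H y →
      cosetsOf H y = {C} ∧ cosetsOf H y⁻¹ = {C} := by
    rintro y C ⟨x, rfl, hxN, hx2⟩ hCy
    have h1 : cosetsOf H x = {((x : G) : G ⧸ H)} := cosetsOf_of_normalizer hxN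
    have h2 : cosetsOf H x = cosetsOf H y := cosetsOf_eq_of_mem hCy
    have hxx : ((x⁻¹ : G) : G ⧸ H) = ((x : G) : G ⧸ H) := by
      rw [QuotientGroup.eq, inv_inv, ← sq]; exact hx2
    have h4 : cosetsOf H y⁻¹ = cosetsOf H x⁻¹ := (cosetsOf_inv_congr h2).symm
    have h5 : cosetsOf H x⁻¹ = {((x⁻¹ : G) : G ⧸ H)} :=
      cosetsOf_of_normalizer ((Subgroup.normalizer (H : Set G)).inv_mem hxN)
    constructor
    · rw [← h2, h1]
    · rw [h4, h5, hxx]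
  have hbal : Bal H Aᶜ := by
    intro y
    by_cases hAy : ∃ C ∈ A, C ∈ cosetsOf H y
    · obtain ⟨C, hCA, hCy⟩ := hAy
      obtain ⟨hy1, hy2⟩ := hAcos y C hCA hCy
      have e1 : Aᶜ ∩ cosetsOf H y = ∅ := by
        rw [hy1]
        ext C'
        simp only [Set.mem_inter_iff, Set.mem_compl_iff, Set.mem_singleton_iff,
          Set.mem_empty_iff_false, iff_false, not_and]
        rintro hC' rfl
        exact hC' hCA
      have e2 : Aᶜ ∩ cosetsOf H y⁻¹ = ∅ := by
        rw [hy2]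
        ext C'
        simp only [Set.mem_inter_iff, Set.mem_compl_iff, Set.mem_singleton_iff,
          Set.mem_empty_iff_false, iff_false, not_and]
        rintro hC' rfl
        exact hC' hCA
      rw [e1, e2]
      simp
    · push_neg at hAy
      have hAyi : ∀ C ∈ A, C ∉ cosetsOf H y⁻¹ := by
        intro C hCA hCyi
        obtain ⟨hy1, hy2⟩ := hAcos y⁻¹ C hCA hCyi
        rw [inv_inv] at hy2
        exact hAy C hCA (by rw [hy2]; exact rfl)
      have e1 : Aᶜ ∩ cosetsOf H y = cosetsOf H y :=
        Set.inter_eq_right.mpr (fun C hC hCA => hAy C hCA hC)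
      have e2 : Aᶜ ∩ cosetsOf H y⁻¹ = cosetsOf H y⁻¹ :=
        Set.inter_eq_right.mpr (fun C hC hCA => hAyi C hCA hC)
      rw [e1, e2]
      refine ⟨ncard_cosetsOf_inv y, ?_⟩
      intro hyy
      by_contra hodd
      have hfact : Fact (Nat.Prime 2) := ⟨Nat.prime_two⟩
      obtain ⟨k, hk⟩ := IsPGroup.iff_card.mp hp2
      have hdvd := ncard_cosetsOf_dvd (H := H) y
      rw [hk] at hdvd
      obtain ⟨j, hjle, hj⟩ := (Nat.dvd_prime_pow Nat.prime_two).mp hdvd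
      have hj0 : j = 0 := by
        by_contra hj0
        apply hodd
        rw [hj]
        simp [Nat.even_pow, hj0]
      have hone : (cosetsOf H y).ncard = 1 := by rw [hj, hj0, pow_zero]
      obtain ⟨C, hC⟩ := Set.ncard_eq_one.mp hone
      have hyC : ((y : G) : G ⧸ H) ∈ cosetsOf H y := mk_mem_cosetsOf y
      rw [hC, Set.mem_singleton_iff] at hyC
      have hN : y ∈ (Subgroup.normalizer (H : Set G)) := normalizer_of_singleton (by rw [hC, ← hyC])
      have hyi : ((y⁻¹ : G) : G ⧸ H) ∈ cosetsOf H y := by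
        rw [← hyy]; exact mk_mem_cosetsOf y⁻¹
      rw [hC, Set.mem_singleton_iff, ← hyC] at hyi
      have hy2 : y ^ 2 ∈ H := by
        have hmem := (QuotientGroup.eq).mp hyi
        rw [inv_inv] at hmem
        rwa [sq]
      exact hAy ((y : G) : G ⧸ H) ⟨y, rfl, hN, hy2⟩ (mk_mem_cosetsOf y)
  obtain ⟨t₀, ht₀1, ht₀2⟩ := exists_partial (Aᶜ.ncard) Aᶜ rfl hbal
  choose w hw1 hw2 using hAw
  refine ⟨fun C => if hC : C ∈ A then w C hC else t₀ C, ?_, ?_⟩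
  · intro C
    dsimp only
    by_cases hC : C ∈ A
    · rw [dif_pos hC]; exact hw1 C hC
    · rw [dif_neg hC]; exact ht₀1 C hC
  · intro C
    by_cases hC : C ∈ A
    · refine ⟨C, ?_⟩
      dsimp only
      rw [dif_pos hC]
      exact (hw2 C hC).symm
    · obtain ⟨C', hC', he⟩ := ht₀2 C hC
      refine ⟨C', ?_⟩
      dsimp only
      rw [dif_neg hC', dif_neg hC]
      exact he

end PerfectCodeAux

theorem perfectCode_iff_involution_in_cosets {G : Type*} [Group G] [Finite G]
    (H : Subgroup G) (h2 : IsPGroup 2 H) :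
    IsPerfectCode H ↔
      ∀ x ∈ Subgroup.normalizer (H : Set G), x ^ 2 ∈ H → ∃ h ∈ H, (x * h) ^ 2 = 1 := by
  constructor
  · rintro ⟨T, hTinv, hT⟩ x hxN hx2
    obtain ⟨t, ⟨htT, htH⟩, huniq⟩ := hT x
    have h1 : t⁻¹ ∈ T := by
      rw [← hTinv, Set.mem_inv, inv_inv]
      exact htT
    have hx' : t * x ∈ H := by
      have key : t * x = (x * (t⁻¹ * x)⁻¹ * x⁻¹) * x ^ 2 := by group
      rw [key]
      exact H.mul_mem ((Subgroup.mem_normalizer_iff.mp hxN _).mp (H.inv_mem htH)) hx2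
    have heq : t⁻¹ = t := huniq t⁻¹ ⟨h1, by rwa [inv_inv]⟩
    refine ⟨(t⁻¹ * x)⁻¹, H.inv_mem htH, ?_⟩
    have h3 : x * (t⁻¹ * x)⁻¹ = t := by group
    rw [h3, sq]
    nth_rewrite 1 [← heq]
    simp
  · intro hyp
    obtain ⟨t, ht1, ht2⟩ := PerfectCodeAux.exists_transversal h2 hyp
    refine ⟨Set.range t, ?_, ?_⟩
    · ext g
      simp only [Set.mem_inv, Set.mem_range]
      constructor
      · rintro ⟨C, hC⟩
        obtain ⟨C', hC'⟩ := ht2 C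
        exact ⟨C', by rw [hC', hC, inv_inv]⟩
      · rintro ⟨C, rfl⟩
        obtain ⟨C', hC'⟩ := ht2 C
        exact ⟨C', hC'⟩
    · intro g
      refine ⟨t ((g : G) : G ⧸ H), ⟨⟨_, rfl⟩, ?_⟩, ?_⟩
      · exact (QuotientGroup.eq).mp (ht1 ((g : G) : G ⧸ H))
      · rintro y ⟨⟨C, rfl⟩, hyH⟩
        have h1 : ((t C : G) : G ⧸ H) = ((g : G) : G ⧸ H) := (QuotientGroup.eq).mpr hyH
        have h2 : C = ((g : G) : G ⧸ H) := by rw [← ht1 C, h1]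
        rw [h2]
end

section
/- Let G be a finite group and H a subgroup of G. If |H| is odd or the index |G : H| is odd, then H is a perfect code of G. -/
namespace PerfectCodeAux

variable {G : Type*} [Group G] {H : Subgroup G}

/-- left coset `vH` -/
def cst (H : Subgroup G) (v : G) : Set G := {g | v⁻¹ * g ∈ H}
/-- right coset `Hv` -/
def rcst (H : Subgroup G) (v : G) : Set G := {g | g * v⁻¹ ∈ H}
/-- double coset `HaH` -/
def Dos (H : Subgroup G) (a : G) : Set G :=
  {g | ∃ h₁, h₁ ∈ H ∧ ∃ h₂, h₂ ∈ H ∧ g = h₁ * a * h₂}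

lemma mem_cst {v g : G} : g ∈ cst H v ↔ v⁻¹ * g ∈ H := Iff.rfl
lemma mem_rcst {v g : G} : g ∈ rcst H v ↔ g * v⁻¹ ∈ H := Iff.rfl

lemma self_mem_cst (v : G) : v ∈ cst H v := by simp [mem_cst, one_mem]
lemma self_mem_rcst (v : G) : v ∈ rcst H v := by simp [mem_rcst, one_mem]

lemma cst_eq_of_mem {v z : G} (hz : z ∈ cst H v) : cst H z = cst H v := by
  ext g
  rw [mem_cst] at hz
  constructor <;> intro hg <;> rw [mem_cst] at hg ⊢
  · have : v⁻¹ * g = (v⁻¹ * z) * (z⁻¹ * g) := by group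
    rw [this]; exact mul_mem hz hg
  · have : z⁻¹ * g = (v⁻¹ * z)⁻¹ * (v⁻¹ * g) := by group
    rw [this]; exact mul_mem (inv_mem hz) hg

lemma rcst_eq_of_mem {v z : G} (hz : z ∈ rcst H v) : rcst H z = rcst H v := by
  ext g
  rw [mem_rcst] at hz
  constructor <;> intro hg <;> rw [mem_rcst] at hg ⊢
  · have : g * v⁻¹ = (g * z⁻¹) * (z * v⁻¹) := by group
    rw [this]; exact mul_mem hg hz
  · have : g * z⁻¹ = (g * v⁻¹) * (z * v⁻¹)⁻¹ := by group
    rw [this]; exact mul_mem hg (inv_mem hz)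

lemma cst_disjoint {v w : G} (h : cst H v ≠ cst H w) : cst H v ∩ cst H w = ∅ := by
  by_contra hne
  obtain ⟨g, hg1, hg2⟩ := Set.nonempty_iff_ne_empty.2 hne
  exact h ((cst_eq_of_mem hg1).symm.trans (cst_eq_of_mem hg2))

lemma cst_subset {V : Set G} (hLC : ∀ u ∈ V, ∀ h ∈ H, u * h ∈ V) {v : G} (hv : v ∈ V) :
    cst H v ⊆ V := by
  intro g hg
  have : g = v * (v⁻¹ * g) := by group
  rw [this]; exact hLC v hv _ hg

lemma rcst_subset {V : Set G} (hRC : ∀ u ∈ V, ∀ h ∈ H, h * u ∈ V) {v : G} (hv : v ∈ V) :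
    rcst H v ⊆ V := by
  intro g hg
  have : g = (g * v⁻¹) * v := by group
  rw [this]; exact hRC v hv _ hg

lemma cst_image (v : G) : cst H v = (fun h => v * h) '' (H : Set G) := by
  ext g
  simp only [Set.mem_image, SetLike.mem_coe, mem_cst]
  constructor
  · intro hg; exact ⟨v⁻¹ * g, hg, by group⟩
  · rintro ⟨h, hh, rfl⟩; simpa using hh

lemma rcst_image (v : G) : rcst H v = (fun h => h * v) '' (H : Set G) := by
  ext g
  simp only [Set.mem_image, SetLike.mem_coe, mem_rcst]
  constructor
  · intro hg; exact ⟨g * v⁻¹, hg, by group⟩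
  · rintro ⟨h, hh, rfl⟩; simpa using hh

lemma ncard_cst [Finite G] (v : G) : (cst H v).ncard = Nat.card H := by
  rw [cst_image, Set.ncard_image_of_injective _ (mul_right_injective v),
    ← Nat.card_coe_set_eq]
  rfl

lemma ncard_rcst [Finite G] (v : G) : (rcst H v).ncard = Nat.card H := by
  rw [rcst_image, Set.ncard_image_of_injective _ (mul_left_injective v),
    ← Nat.card_coe_set_eq]
  rfl

/-- Lemma A : if `y ∈ HxH` then `xH ∩ Hy ≠ ∅`. -/
lemma exists_mem_cst_rcst {x y : G} (hy : y ∈ Dos H x) :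
    ∃ z, z ∈ cst H x ∧ z ∈ rcst H y := by
  obtain ⟨h₁, hh₁, h₂, hh₂, rfl⟩ := hy
  refine ⟨x * h₂, by simpa [mem_cst] using hh₂, ?_⟩
  rw [mem_rcst]
  have : x * h₂ * (h₁ * x * h₂)⁻¹ = h₁⁻¹ := by group
  rw [this]; exact inv_mem hh₁

lemma mem_Dos_self (a : G) : a ∈ Dos H a := ⟨1, one_mem _, 1, one_mem _, by group⟩

lemma Dos_eq_of_mem {a v : G} (hv : v ∈ Dos H a) : Dos H v = Dos H a := by
  obtain ⟨h₁, hh₁, h₂, hh₂, rfl⟩ := hv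
  ext g
  constructor
  · rintro ⟨k₁, hk₁, k₂, hk₂, rfl⟩
    exact ⟨k₁ * h₁, mul_mem hk₁ hh₁, h₂ * k₂, mul_mem hh₂ hk₂, by group⟩
  · rintro ⟨k₁, hk₁, k₂, hk₂, rfl⟩
    exact ⟨k₁ * h₁⁻¹, mul_mem hk₁ (inv_mem hh₁), h₂⁻¹ * k₂,
      mul_mem (inv_mem hh₂) hk₂, by group⟩

lemma LC_Dos (a : G) : ∀ u ∈ Dos H a, ∀ h ∈ H, u * h ∈ Dos H a := by
  rintro u ⟨h₁, hh₁, h₂, hh₂, rfl⟩ h hh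
  exact ⟨h₁, hh₁, h₂ * h, mul_mem hh₂ hh, by group⟩

lemma RC_Dos (a : G) : ∀ u ∈ Dos H a, ∀ h ∈ H, h * u ∈ Dos H a := by
  rintro u ⟨h₁, hh₁, h₂, hh₂, rfl⟩ h hh
  exact ⟨h * h₁, mul_mem hh hh₁, h₂, hh₂, by group⟩

lemma inv_Dos (a : G) : (Dos H a)⁻¹ = Dos H a⁻¹ := by
  ext g
  simp only [Set.mem_inv]
  constructor
  · rintro ⟨h₁, hh₁, h₂, hh₂, hg⟩
    refine ⟨h₂⁻¹, inv_mem hh₂, h₁⁻¹, inv_mem hh₁, ?_⟩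
    have : g = (h₁ * a * h₂)⁻¹ := by rw [← hg]; group
    rw [this]; group
  · rintro ⟨h₁, hh₁, h₂, hh₂, rfl⟩
    exact ⟨h₂⁻¹, inv_mem hh₂, h₁⁻¹, inv_mem hh₁, by group⟩

lemma Dos_inv_eq {a : G} (ha : a⁻¹ ∈ Dos H a) : (Dos H a)⁻¹ = Dos H a := by
  rw [inv_Dos]
  exact Dos_eq_of_mem ha

lemma Dos_disjoint {a : G} (ha : a⁻¹ ∉ Dos H a) : Dos H a ∩ (Dos H a)⁻¹ = ∅ := by
  by_contra hne
  obtain ⟨z, hz1, hz2⟩ := Set.nonempty_iff_ne_empty.2 hne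
  rw [Set.mem_inv] at hz2
  obtain ⟨h₁, hh₁, h₂, hh₂, hz⟩ := hz1
  obtain ⟨k₁, hk₁, k₂, hk₂, hzi⟩ := hz2
  apply ha
  refine ⟨h₂ * k₁, mul_mem hh₂ hk₁, k₂ * h₁, mul_mem hk₂ hh₁, ?_⟩
  have : a⁻¹ = h₂ * z⁻¹ * h₁ := by rw [hz]; group
  rw [this, hzi]; group


section CT
variable [Finite G]

set_option linter.unusedSectionVars false
set_option linter.unusedVariables false

lemma cardH_pos : 0 < Nat.card H := Nat.card_pos

lemma cst_notmem_mul {V : Set G} {v u h : G} (huc : u ∉ cst H v) (hh : h ∈ H) :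
    u * h ∉ cst H v := by
  intro hc
  apply huc
  rw [mem_cst] at hc ⊢
  have : v⁻¹ * u = (v⁻¹ * (u * h)) * h⁻¹ := by group
  rw [this]; exact mul_mem hc (inv_mem hh)

lemma rcst_notmem_mul {V : Set G} {v u h : G} (huc : u ∉ rcst H v) (hh : h ∈ H) :
    h * u ∉ rcst H v := by
  intro hc
  apply huc
  rw [mem_rcst] at hc ⊢
  have : u * v⁻¹ = h⁻¹ * (h * u * v⁻¹) := by group
  rw [this]; exact mul_mem (inv_mem hh) hc

/-- size of an `LC`-closed set is a multiple of `|H|`. -/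
lemma exists_ncard_eq_mul :
    ∀ n (V : Set G), V.ncard ≤ n → (∀ u ∈ V, ∀ h ∈ H, u * h ∈ V) →
    ∃ k, V.ncard = k * Nat.card H := by
  intro n
  induction n with
  | zero =>
    intro V hV _
    exact ⟨0, by omega⟩
  | succ n ih =>
    intro V hV hLC
    rcases eq_or_ne V ∅ with rfl | hne
    · exact ⟨0, by simp⟩
    obtain ⟨v, hv⟩ := Set.nonempty_iff_ne_empty.2 hne
    have hsub : cst H v ⊆ V := cst_subset hLC hv
    have hle : Nat.card H ≤ V.ncard := by
      rw [← ncard_cst (H := H) v]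
      exact Set.ncard_le_ncard hsub (Set.toFinite V)
    have hdiff : (V \ cst H v).ncard = V.ncard - Nat.card H := by
      rw [Set.ncard_diff hsub, ncard_cst]
    have hLC' : ∀ u ∈ V \ cst H v, ∀ h ∈ H, u * h ∈ V \ cst H v := by
      rintro u ⟨huV, huc⟩ h hh
      exact ⟨hLC u huV h hh, cst_notmem_mul (V := V) huc hh⟩
    have hpos := cardH_pos (H := H)
    obtain ⟨k, hk⟩ := ih (V \ cst H v) (by omega) hLC'
    exact ⟨k + 1, by rw [add_mul, one_mul, ← hk]; omega⟩

/-- common left/right transversal within cross-connected sets. -/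
lemma CT : ∀ n (VL VR : Set G), VL.ncard ≤ n → VL.ncard = VR.ncard →
    (∀ u ∈ VL, ∀ h ∈ H, u * h ∈ VL) → (∀ u ∈ VR, ∀ h ∈ H, h * u ∈ VR) →
    (∀ v ∈ VL, ∀ w ∈ VR, w ∈ Dos H v) →
    ∃ T : Set G, T ⊆ VL ∧ T ⊆ VR ∧
      (∀ g ∈ VL, ∃! t, t ∈ T ∧ t⁻¹ * g ∈ H) ∧
      (∀ g ∈ VR, ∃! t, t ∈ T ∧ g * t⁻¹ ∈ H) := by
  intro n
  induction n with
  | zero =>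
    intro VL VR hn hcard _ _ _
    have hL : VL = ∅ := by
      rw [← Set.ncard_eq_zero (Set.toFinite VL)]; omega
    have hR : VR = ∅ := by
      rw [← Set.ncard_eq_zero (Set.toFinite VR)]; omega
    subst hL hR
    exact ⟨∅, by simp, by simp, by simp, by simp⟩
  | succ n ih =>
    intro VL VR hn hcard hLC hRC hcross
    rcases eq_or_ne VL ∅ with rfl | hne
    · have hR : VR = ∅ := by
        rw [← Set.ncard_eq_zero (Set.toFinite VR)]; simp at hcard; omega
      subst hR
      exact ⟨∅, by simp, by simp, by simp, by simp⟩
    obtain ⟨v, hv⟩ := Set.nonempty_iff_ne_empty.2 hne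
    have hRne : VR.Nonempty := by
      apply Set.nonempty_of_ncard_ne_zero
      rw [← hcard]
      exact fun h => hne ((Set.ncard_eq_zero (Set.toFinite VL)).1 h)
    obtain ⟨w, hw⟩ := hRne
    obtain ⟨z, hzL, hzR⟩ := exists_mem_cst_rcst (hcross v hv w hw)
    have hzVL : z ∈ VL := cst_subset hLC hv hzL
    have hzVR : z ∈ VR := rcst_subset hRC hw hzR
    have hcz : cst H z = cst H v := cst_eq_of_mem hzL
    have hrz : rcst H z = rcst H w := rcst_eq_of_mem hzR
    set VL' := VL \ cst H v with hVL'
    set VR' := VR \ rcst H w with hVR'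
    have hsubL : cst H v ⊆ VL := cst_subset hLC hv
    have hsubR : rcst H w ⊆ VR := rcst_subset hRC hw
    have hpos := cardH_pos (H := H)
    have hcL : VL'.ncard = VL.ncard - Nat.card H := by
      rw [hVL', Set.ncard_diff hsubL, ncard_cst]
    have hcR : VR'.ncard = VR.ncard - Nat.card H := by
      rw [hVR', Set.ncard_diff hsubR, ncard_rcst]
    have hleL : Nat.card H ≤ VL.ncard := by
      rw [← ncard_cst (H := H) v]
      exact Set.ncard_le_ncard hsubL (Set.toFinite VL)
    have hLC' : ∀ u ∈ VL', ∀ h ∈ H, u * h ∈ VL' := by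
      rintro u ⟨huV, huc⟩ h hh
      exact ⟨hLC u huV h hh, cst_notmem_mul (V := VL) huc hh⟩
    have hRC' : ∀ u ∈ VR', ∀ h ∈ H, h * u ∈ VR' := by
      rintro u ⟨huV, huc⟩ h hh
      exact ⟨hRC u huV h hh, rcst_notmem_mul (V := VR) huc hh⟩
    obtain ⟨T', hT'L, hT'R, huL, huR⟩ :=
      ih VL' VR' (by omega) (by omega)
        hLC' hRC' (fun a ha b hb => hcross a ha.1 b hb.1)
    refine ⟨insert z T', ?_, ?_, ?_, ?_⟩
    · exact Set.insert_subset hzVL (hT'L.trans Set.diff_subset)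
    · exact Set.insert_subset hzVR (hT'R.trans Set.diff_subset)
    · intro g hg
      by_cases hgc : g ∈ cst H v
      · refine ⟨z, ⟨Set.mem_insert _ _, by rw [← mem_cst, hcz]; exact hgc⟩, ?_⟩
        rintro t ⟨ht, htg⟩
        rcases Set.mem_insert_iff.1 ht with rfl | htT'
        · rfl
        · exfalso
          have : g ∈ cst H t := htg
          have : g ∈ VL' := cst_subset hLC' (hT'L htT') this
          exact this.2 hgc
      · have hg' : g ∈ VL' := ⟨hg, hgc⟩
        obtain ⟨t, ⟨htT, htg⟩, hun⟩ := huL g hg'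
        refine ⟨t, ⟨Set.mem_insert_of_mem _ htT, htg⟩, ?_⟩
        rintro s ⟨hs, hsg⟩
        rcases Set.mem_insert_iff.1 hs with rfl | hsT'
        · exfalso
          apply hgc
          rw [← hcz]
          exact hsg
        · exact hun s ⟨hsT', hsg⟩
    · intro g hg
      by_cases hgc : g ∈ rcst H w
      · refine ⟨z, ⟨Set.mem_insert _ _, by rw [← mem_rcst, hrz]; exact hgc⟩, ?_⟩
        rintro t ⟨ht, htg⟩
        rcases Set.mem_insert_iff.1 ht with rfl | htT'
        · rfl
        · exfalso
          have : g ∈ rcst H t := htg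
          have : g ∈ VR' := rcst_subset hRC' (hT'R htT') this
          exact this.2 hgc
      · have hg' : g ∈ VR' := ⟨hg, hgc⟩
        obtain ⟨t, ⟨htT, htg⟩, hun⟩ := huR g hg'
        refine ⟨t, ⟨Set.mem_insert_of_mem _ htT, htg⟩, ?_⟩
        rintro s ⟨hs, hsg⟩
        rcases Set.mem_insert_iff.1 hs with rfl | hsT'
        · exfalso
          apply hgc
          rw [← hrz]
          exact hsg
        · exact hun s ⟨hsT', hsg⟩

end CT

section W2
variable [Finite G]

/-- inverse-closed transversal on an even, "symmetric" union of left cosets. -/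
lemma W2 : ∀ k (V : Set G),
    (∀ u ∈ V, ∀ h ∈ H, u * h ∈ V) → (∀ v ∈ V, ∀ w ∈ V, w⁻¹ ∈ Dos H v) →
    V.ncard = 2 * k * Nat.card H →
    ∃ T : Set G, T ⊆ V ∧ (∀ t ∈ T, t⁻¹ ∈ T) ∧
      (∀ g ∈ V, ∃! t, t ∈ T ∧ t⁻¹ * g ∈ H) := by
  intro k
  induction k with
  | zero =>
    intro V _ _ hcard
    have : V = ∅ := by
      rw [← Set.ncard_eq_zero (Set.toFinite V)]; simpa using hcard
    subst this
    exact ⟨∅, by simp, by simp, by simp⟩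
  | succ k ih =>
    intro V hLC hii hcard
    have hpos := cardH_pos (H := H)
    have hVne : V.Nonempty := by
      apply Set.nonempty_of_ncard_ne_zero
      rw [hcard]
      positivity
    obtain ⟨v, hv⟩ := hVne
    have hsubv : cst H v ⊆ V := cst_subset hLC hv
    have hwne : (V \ cst H v).Nonempty := by
      apply Set.nonempty_of_ncard_ne_zero
      rw [Set.ncard_diff hsubv, ncard_cst, hcard]
      have : Nat.card H < 2 * (k + 1) * Nat.card H := by nlinarith
      omega
    obtain ⟨w, hwV, hwc⟩ := hwne
    obtain ⟨z, hzL, hzR⟩ := exists_mem_cst_rcst (hii v hv w hwV)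
    have hziw : z⁻¹ ∈ cst H w := by
      rw [mem_rcst] at hzR
      rw [mem_cst]
      have : w⁻¹ * z⁻¹ = (z * (w⁻¹)⁻¹)⁻¹ := by group
      rw [this]; exact inv_mem hzR
    have hcz : cst H z = cst H v := cst_eq_of_mem hzL
    have hczi : cst H z⁻¹ = cst H w := cst_eq_of_mem hziw
    have hcvw : cst H v ≠ cst H w := by
      intro h
      exact hwc (h ▸ self_mem_cst w)
    have hdisj : cst H v ∩ cst H w = ∅ := cst_disjoint hcvw
    have hzV : z ∈ V := hsubv hzL
    have hsubw : cst H w ⊆ V := cst_subset hLC hwV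
    have hziV : z⁻¹ ∈ V := hsubw hziw
    set V' := V \ (cst H v ∪ cst H w) with hV'
    have hsubu : cst H v ∪ cst H w ⊆ V := Set.union_subset hsubv hsubw
    have hcard' : V'.ncard = 2 * k * Nat.card H := by
      rw [hV', Set.ncard_diff hsubu, Set.ncard_union_eq
        (Set.disjoint_iff_inter_eq_empty.2 hdisj) (Set.toFinite _) (Set.toFinite _),
        ncard_cst, ncard_cst, hcard]
      ring_nf
      omega
    have hLC' : ∀ u ∈ V', ∀ h ∈ H, u * h ∈ V' := by
      rintro u ⟨huV, huc⟩ h hh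
      refine ⟨hLC u huV h hh, ?_⟩
      rw [Set.mem_union] at huc ⊢
      push_neg at huc ⊢
      exact ⟨cst_notmem_mul (V := V) huc.1 hh, cst_notmem_mul (V := V) huc.2 hh⟩
    obtain ⟨T', hT'V, hT'inv, hT'u⟩ :=
      ih V' hLC' (fun a ha b hb => hii a ha.1 b hb.1) hcard'
    have hT'V' : T' ⊆ V' := hT'V
    refine ⟨insert z (insert z⁻¹ T'), ?_, ?_, ?_⟩
    · refine Set.insert_subset hzV (Set.insert_subset hziV (hT'V.trans Set.diff_subset))
    · intro t ht
      rcases Set.mem_insert_iff.1 ht with rfl | ht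
      · exact Set.mem_insert_of_mem _ (Set.mem_insert _ _)
      rcases Set.mem_insert_iff.1 ht with rfl | ht
      · rw [inv_inv]; exact Set.mem_insert _ _
      · exact Set.mem_insert_of_mem _ (Set.mem_insert_of_mem _ (hT'inv t ht))
    · intro g hg
      by_cases hgv : g ∈ cst H v
      · refine ⟨z, ⟨Set.mem_insert _ _, by rw [← mem_cst, hcz]; exact hgv⟩, ?_⟩
        rintro s ⟨hs, hsg⟩
        rcases Set.mem_insert_iff.1 hs with rfl | hs
        · rfl
        rcases Set.mem_insert_iff.1 hs with rfl | hs
        · exfalso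
          have : g ∈ cst H w := by rw [← hczi]; exact hsg
          exact Set.eq_empty_iff_forall_notMem.1 hdisj g ⟨hgv, this⟩
        · exfalso
          have : g ∈ V' := cst_subset hLC' (hT'V' hs) hsg
          exact this.2 (Set.mem_union_left _ hgv)
      by_cases hgw : g ∈ cst H w
      · refine ⟨z⁻¹, ⟨Set.mem_insert_of_mem _ (Set.mem_insert _ _),
          by rw [← mem_cst, hczi]; exact hgw⟩, ?_⟩
        rintro s ⟨hs, hsg⟩
        rcases Set.mem_insert_iff.1 hs with rfl | hs
        · exfalso
          have : g ∈ cst H v := by rw [← hcz]; exact hsg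
          exact hgv this
        rcases Set.mem_insert_iff.1 hs with rfl | hs
        · rfl
        · exfalso
          have : g ∈ V' := cst_subset hLC' (hT'V' hs) hsg
          exact this.2 (Set.mem_union_right _ hgw)
      · have hg' : g ∈ V' := ⟨hg, by rw [Set.mem_union]; push_neg; exact ⟨hgv, hgw⟩⟩
        obtain ⟨t, ⟨htT, htg⟩, hun⟩ := hT'u g hg'
        refine ⟨t, ⟨Set.mem_insert_of_mem _ (Set.mem_insert_of_mem _ htT), htg⟩, ?_⟩
        rintro s ⟨hs, hsg⟩
        rcases Set.mem_insert_iff.1 hs with rfl | hs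
        · exact absurd (by rw [← hcz]; exact hsg) hgv
        rcases Set.mem_insert_iff.1 hs with rfl | hs
        · exact absurd (by rw [← hczi]; exact hsg) hgw
        · exact hun s ⟨hs, hsg⟩

end W2

section Invol
variable [Finite G]

lemma finset_invol_fix {α : Type*} [DecidableEq α] :
    ∀ n (s : Finset α) (f : α → α), s.card ≤ n → (∀ x ∈ s, f x ∈ s) →
    (∀ x ∈ s, f (f x) = x) → Odd s.card → ∃ y ∈ s, f y = y := by
  intro n
  induction n with
  | zero =>
    intro s f hn _ _ hodd
    interval_cases h : s.card
    · simp at hodd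
  | succ n ih =>
    intro s f hn hmap hinv hodd
    by_cases hex : ∃ x ∈ s, f x ≠ x
    · obtain ⟨x, hx, hfx⟩ := hex
      have hfxs : f x ∈ s := hmap x hx
      set s' := (s.erase x).erase (f x) with hs'
      have hfm : f x ∈ s.erase x := Finset.mem_erase.2 ⟨hfx, hfxs⟩
      have hcard : s'.card = s.card - 2 := by
        rw [hs', Finset.card_erase_of_mem hfm, Finset.card_erase_of_mem hx]
        omega
      have h2 : 2 ≤ s.card := by
        have := Finset.one_lt_card.2 ⟨x, hx, f x, hfxs, fun h => hfx h.symm⟩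
        omega
      have hmem' : ∀ z ∈ s', z ∈ s ∧ z ≠ x ∧ z ≠ f x := by
        intro z hz
        rw [hs', Finset.mem_erase, Finset.mem_erase] at hz
        exact ⟨hz.2.2, hz.2.1, hz.1⟩
      have hmap' : ∀ z ∈ s', f z ∈ s' := by
        intro z hz
        obtain ⟨hzs, hzx, hzfx⟩ := hmem' z hz
        rw [hs', Finset.mem_erase, Finset.mem_erase]
        refine ⟨?_, ?_, hmap z hzs⟩
        · intro h
          exact hzx (by rw [← hinv z hzs, h, hinv x hx])
        · intro h
          exact hzfx (by rw [← hinv z hzs, h])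
      have hinv' : ∀ z ∈ s', f (f z) = z := fun z hz => hinv z (hmem' z hz).1
      have hodd' : Odd s'.card := by
        obtain ⟨j, hj⟩ := hodd
        rw [hcard]
        exact ⟨j - 1, by omega⟩
      obtain ⟨y, hy, hfy⟩ := ih s' f (by omega) hmap' hinv' hodd'
      exact ⟨y, (hmem' y hy).1, hfy⟩
    · push_neg at hex
      have : s.Nonempty := by
        rw [← Finset.card_ne_zero]
        intro h; rw [h] at hodd; simp at hodd
      obtain ⟨y, hy⟩ := this
      exact ⟨y, hy, hex y hy⟩

lemma exists_invol {V : Set G} (hV : V⁻¹ = V) (hodd : Odd V.ncard) :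
    ∃ y ∈ V, y * y = 1 := by
  classical
  have hfin : V.Finite := Set.toFinite V
  have hmap : ∀ x ∈ hfin.toFinset, x⁻¹ ∈ hfin.toFinset := by
    intro x hx
    rw [Set.Finite.mem_toFinset] at hx ⊢
    rw [← hV, Set.mem_inv, inv_inv]
    exact hx
  have hcard : Odd hfin.toFinset.card := by
    rwa [← Set.ncard_eq_toFinset_card V hfin]
  obtain ⟨y, hy, hfy⟩ := finset_invol_fix hfin.toFinset.card hfin.toFinset (fun x => x⁻¹)
    le_rfl hmap (fun x _ => inv_inv x) hcard
  refine ⟨y, hfin.mem_toFinset.1 hy, ?_⟩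
  calc y * y = y * y⁻¹ := by rw [hfy]
  _ = 1 := by group

end Invol

section CardDos
variable [Finite G]

lemma ncard_Dos (x : G) :
    (Dos H x).ncard =
      Nat.card (↥H ⧸ ((H ⊓ H.map (MulAut.conj x).toMonoidHom).subgroupOf H)) * Nat.card H := by
  classical
  set H' := H ⊓ H.map (MulAut.conj x).toMonoidHom with hH'
  set K := H'.subgroupOf H with hKdef
  have hmemD : ∀ p : (↥H ⧸ K) × ↥H, ((p.1.out : G) * x * (p.2 : G)) ∈ Dos H x :=
    fun p => ⟨p.1.out, SetLike.coe_mem _, p.2, SetLike.coe_mem _, rfl⟩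
  set F : (↥H ⧸ K) × ↥H → ↥(Dos H x) :=
    fun p => ⟨(p.1.out : G) * x * (p.2 : G), hmemD p⟩ with hF
  have hbij : Function.Bijective F := by
    constructor
    · rintro ⟨c, h⟩ ⟨d, h'⟩ heq'
      have heq : ((c.out : G) : G) * x * (h : G) = (d.out : G) * x * (h' : G) :=
        congrArg Subtype.val heq'
      set u : ↥H := c.out with hu
      set vv : ↥H := d.out with hvv
      have key : ((vv : G))⁻¹ * (u : G) = x * ((h' : G) * ((h : G))⁻¹) * x⁻¹ := by
        have h1 : ((vv:G))⁻¹ * ((u:G) * x * (h:G)) * ((h:G))⁻¹ * x⁻¹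
            = ((vv:G))⁻¹ * ((vv:G) * x * (h':G)) * ((h:G))⁻¹ * x⁻¹ := by rw [heq]
        calc ((vv:G))⁻¹ * (u:G)
            = ((vv:G))⁻¹ * ((u:G) * x * (h:G)) * ((h:G))⁻¹ * x⁻¹ := by group
          _ = ((vv:G))⁻¹ * ((vv:G) * x * (h':G)) * ((h:G))⁻¹ * x⁻¹ := h1
          _ = x * ((h':G) * ((h:G))⁻¹) * x⁻¹ := by group
      have hmemK : vv⁻¹ * u ∈ K := by
        rw [hKdef, Subgroup.mem_subgroupOf]
        refine Subgroup.mem_inf.2 ⟨SetLike.coe_mem _, ?_⟩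
        refine Subgroup.mem_map.2 ⟨(h' : G) * ((h : G))⁻¹,
          mul_mem (SetLike.coe_mem _) (inv_mem (SetLike.coe_mem _)), ?_⟩
        simp only [MulEquiv.coe_toMonoidHom, MulAut.conj_apply]
        push_cast
        exact key.symm
      have hcd : c = d := by
        have h1 : (QuotientGroup.mk vv : ↥H ⧸ K) = QuotientGroup.mk u :=
          QuotientGroup.eq.2 hmemK
        have h2 : (QuotientGroup.mk u : ↥H ⧸ K) = c := QuotientGroup.out_eq' c
        have h3 : (QuotientGroup.mk vv : ↥H ⧸ K) = d := QuotientGroup.out_eq' d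
        rw [← h2, ← h3, h1]
      subst hcd
      have huvv : u = vv := rfl
      have hh : h = h' := by
        apply Subtype.ext
        apply mul_left_cancel (a := (u : G) * x)
        exact heq
      rw [hh]
    · rintro ⟨g, h₁, m₁, h₂, m₂, rfl⟩
      set c : ↥H ⧸ K := QuotientGroup.mk ⟨h₁, m₁⟩ with hc
      obtain ⟨k, hk⟩ := QuotientGroup.mk_out_eq_mul K (⟨h₁, m₁⟩ : ↥H)
      have hkH' : ((k : ↥H) : G) ∈ H' := Subgroup.mem_subgroupOf.1 k.2
      obtain ⟨w, hw, hwx⟩ := Subgroup.mem_map.1 (Subgroup.mem_inf.1 hkH').2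
      simp only [MulEquiv.coe_toMonoidHom, MulAut.conj_apply] at hwx
      refine ⟨⟨c, (⟨w, hw⟩ : ↥H)⁻¹ * ⟨h₂, m₂⟩⟩, ?_⟩
      apply Subtype.ext
      show ((c.out : ↥H) : G) * x * (((⟨w, hw⟩ : ↥H)⁻¹ * ⟨h₂, m₂⟩ : ↥H) : G)
        = h₁ * x * h₂
      rw [hk]
      push_cast
      rw [← hwx]
      all_goals group
  have hcards := Nat.card_eq_of_bijective F hbij
  rw [← Nat.card_coe_set_eq, ← hcards, Nat.card_prod]

lemma index_eq_card_quot (K : Subgroup G) : K.index = Nat.card (G ⧸ K) := rfl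

end CardDos

section Core
variable [Finite G]
set_option linter.unusedSectionVars false

lemma core_oddindex (hidx : Odd H.index) {a : G} (ha : a⁻¹ ∈ Dos H a)
    {k : ℕ} (hcard : (Dos H a).ncard = (2 * k + 1) * Nat.card H) :
    ∃ y ∈ Dos H a, y * y = 1 := by
  obtain ⟨x, hxc, hxr⟩ := exists_mem_cst_rcst (x := a) (y := a⁻¹) ha
  rw [mem_cst] at hxc
  rw [mem_rcst] at hxr
  have hx2 : x * x ∈ H := by
    have : x * x = (x * (a⁻¹)⁻¹) * (a⁻¹ * x) := by group
    rw [this]; exact mul_mem hxr hxc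
  have hxD : x ∈ Dos H a := cst_subset (LC_Dos a) (mem_Dos_self a) hxc
  have hDx : Dos H x = Dos H a := Dos_eq_of_mem hxD
  by_cases hxH : x ∈ H
  · refine ⟨1, ?_, by group⟩
    rw [← hDx]
    exact ⟨x⁻¹, inv_mem hxH, 1, one_mem _, by group⟩
  · exfalso
    set H' := H ⊓ H.map (MulAut.conj x).toMonoidHom with hH'
    have hH'le : H' ≤ H := inf_le_left
    have hmemH' : ∀ g, g ∈ H' ↔ (g ∈ H ∧ ∃ w ∈ H, x * w * x⁻¹ = g) := by
      intro g
      rw [hH', Subgroup.mem_inf]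
      simp [Subgroup.mem_map, MulAut.conj_apply]
    have hconjH : ∀ g ∈ H, (x*x) * g * (x*x)⁻¹ ∈ H := fun g hg =>
      mul_mem (mul_mem hx2 hg) (inv_mem hx2)
    have hx2H' : x * x ∈ H' := by
      rw [hmemH']
      exact ⟨hx2, ⟨x * x, hx2, by group⟩⟩
    have hconj1 : ∀ g ∈ H', x * g * x⁻¹ ∈ H' := by
      intro g hg
      rw [hmemH'] at hg ⊢
      obtain ⟨hgH, w, hw, hwx⟩ := hg
      constructor
      · have : x * g * x⁻¹ = (x*x) * w * (x*x)⁻¹ := by rw [← hwx]; group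
        rw [this]; exact hconjH w hw
      · exact ⟨g, hgH, rfl⟩
    have hconj2 : ∀ g ∈ H', x⁻¹ * g * x ∈ H' := by
      intro g hg
      rw [hmemH'] at hg ⊢
      obtain ⟨hgH, w, hw, hwx⟩ := hg
      constructor
      · have : x⁻¹ * g * x = w := by rw [← hwx]; group
        rw [this]; exact hw
      · refine ⟨(x*x)⁻¹ * g * (x*x), ?_, by group⟩
        exact mul_mem (mul_mem (inv_mem hx2) hgH) hx2
    set L : Subgroup G := {
      carrier := {g | g ∈ H' ∨ g * x⁻¹ ∈ H'}
      one_mem' := Or.inl (one_mem H')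
      mul_mem' := by
        rintro p q (hp | hp) (hq | hq)
        · exact Or.inl (mul_mem hp hq)
        · refine Or.inr ?_
          have : p * q * x⁻¹ = p * (q * x⁻¹) := by group
          rw [this]; exact mul_mem hp hq
        · refine Or.inr ?_
          have : p * q * x⁻¹ = (p * x⁻¹) * (x * q * x⁻¹) := by group
          rw [this]; exact mul_mem hp (hconj1 q hq)
        · refine Or.inl ?_
          have : p * q = (p * x⁻¹) * (x * (q * x⁻¹) * x⁻¹) * (x * x) := by group
          rw [this]; exact mul_mem (mul_mem hp (hconj1 _ hq)) hx2H'
      inv_mem' := by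
        rintro p hp
        rcases hp with hp | hp
        · exact Or.inl (inv_mem hp)
        · refine Or.inr ?_
          have : p⁻¹ * x⁻¹ = (x⁻¹ * (p * x⁻¹)⁻¹ * x) * (x * x)⁻¹ := by group
          rw [this]; exact mul_mem (hconj2 _ (inv_mem hp)) (inv_mem hx2H')
    } with hLdef
    have hxL : x ∈ L := by
      refine Or.inr ?_
      show x * x⁻¹ ∈ H'
      simpa using one_mem H'
    have hH'L : H' ≤ L := fun g hg => Or.inl hg
    have hxH' : x ∉ H' := fun hc => hxH (hH'le hc)
    have hrel2 : H'.relIndex L = 2 := by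
      rw [Subgroup.relIndex, Subgroup.index_eq_two_iff]
      refine ⟨⟨x, hxL⟩, ?_⟩
      intro b
      by_cases hb : (b : G) ∈ H'
      · refine Or.inr ⟨Subgroup.mem_subgroupOf.2 hb, ?_⟩
        intro hc
        have hc' : (b : G) * x ∈ H' := by
          have := Subgroup.mem_subgroupOf.1 hc
          simpa using this
        exact hxH' (by simpa using mul_mem (inv_mem hb) hc')
      · have hb' : (b : G) * x⁻¹ ∈ H' := b.2.resolve_left hb
        refine Or.inl ⟨Subgroup.mem_subgroupOf.2 ?_, fun hc => hb (Subgroup.mem_subgroupOf.1 hc)⟩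
        show (b : G) * x ∈ H'
        have : (b : G) * x = ((b : G) * x⁻¹) * (x * x) := by group
        rw [this]
        exact mul_mem hb' hx2H'
    have hoddrel : Odd (H'.relIndex H) := by
      have h1 := ncard_Dos (H := H) x
      rw [hDx, hcard] at h1
      have hpos := cardH_pos (H := H)
      have h2 : 2 * k + 1 = Nat.card (↥H ⧸ (H'.subgroupOf H)) := by
        apply Nat.eq_of_mul_eq_mul_right hpos
        exact h1
      have h3 : H'.relIndex H = Nat.card (↥H ⧸ (H'.subgroupOf H)) := rfl
      rw [h3, ← h2]
      exact ⟨k, by ring⟩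
    have hoddidx : Odd H'.index := by
      rw [← Subgroup.relIndex_mul_index hH'le]
      exact hoddrel.mul hidx
    have heven : (2 : ℕ) ∣ H'.index := by
      rw [← Subgroup.relIndex_mul_index hH'L, hrel2]
      exact dvd_mul_right 2 _
    rw [Nat.odd_iff] at hoddidx
    omega

end Core

section Assemble
variable [Finite G]
set_option linter.unusedSectionVars false

lemma mem_iff_inv_mem {S : Set G} (hS : S⁻¹ = S) {x : G} : x⁻¹ ∈ S ↔ x ∈ S := by
  constructor
  · intro h
    rw [← hS, Set.mem_inv]
    exact h
  · intro h
    rw [← hS] at h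
    rwa [Set.mem_inv] at h

lemma symD (hyp : Odd (Nat.card H) ∨ Odd H.index) {a : G} (ha : a⁻¹ ∈ Dos H a) :
    ∃ T : Set G, T ⊆ Dos H a ∧ (∀ t ∈ T, t⁻¹ ∈ T) ∧
      (∀ g ∈ Dos H a, ∃! t, t ∈ T ∧ t⁻¹ * g ∈ H) := by
  have hLC := LC_Dos (H := H) a
  have hii : ∀ v ∈ Dos H a, ∀ w ∈ Dos H a, w⁻¹ ∈ Dos H v := by
    intro v hv w hw
    rw [Dos_eq_of_mem hv]
    rw [← Dos_inv_eq ha, Set.mem_inv, inv_inv]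
    exact hw
  obtain ⟨m, hm⟩ := exists_ncard_eq_mul (H := H) (Dos H a).ncard (Dos H a) le_rfl hLC
  have hpos := cardH_pos (H := H)
  rcases Nat.even_or_odd m with ⟨j, hj⟩ | ⟨j, hj⟩
  · apply W2 j _ hLC hii
    rw [hm, hj]; ring
  · have hodd : ∃ y ∈ Dos H a, y * y = 1 := by
      rcases hyp with hH | hidx
      · apply exists_invol (Dos_inv_eq ha)
        rw [hm]
        exact Odd.mul ⟨j, hj⟩ hH
      · exact core_oddindex hidx ha (by rw [hm, hj])
    obtain ⟨y, hyD, hy2⟩ := hodd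
    have hyinv : y⁻¹ = y := inv_eq_of_mul_eq_one_left hy2
    set V' := Dos H a \ cst H y with hV'
    have hsub : cst H y ⊆ Dos H a := cst_subset hLC hyD
    have hcard' : V'.ncard = 2 * j * Nat.card H := by
      rw [hV', Set.ncard_diff hsub, ncard_cst, hm, hj]
      have : (2 * j + 1) * Nat.card H = 2 * j * Nat.card H + Nat.card H := by ring
      omega
    have hLC' : ∀ u ∈ V', ∀ h ∈ H, u * h ∈ V' := by
      rintro u ⟨huV, huc⟩ h hh
      exact ⟨hLC u huV h hh, cst_notmem_mul (V := V') huc hh⟩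
    obtain ⟨T', hT'V, hT'inv, hT'u⟩ :=
      W2 j V' hLC' (fun v hv w hw => hii v hv.1 w hw.1) hcard'
    refine ⟨insert y T', ?_, ?_, ?_⟩
    · exact Set.insert_subset hyD (hT'V.trans Set.diff_subset)
    · intro t ht
      rcases Set.mem_insert_iff.1 ht with rfl | ht
      · rw [hyinv]; exact Set.mem_insert _ _
      · exact Set.mem_insert_of_mem _ (hT'inv t ht)
    · intro g hg
      by_cases hgy : g ∈ cst H y
      · refine ⟨y, ⟨Set.mem_insert _ _, hgy⟩, ?_⟩
        rintro s ⟨hs, hsg⟩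
        rcases Set.mem_insert_iff.1 hs with rfl | hs
        · rfl
        · exfalso
          have : g ∈ V' := cst_subset hLC' (hT'V hs) hsg
          exact this.2 hgy
      · have hg' : g ∈ V' := ⟨hg, hgy⟩
        obtain ⟨t, ⟨htT, htg⟩, hun⟩ := hT'u g hg'
        refine ⟨t, ⟨Set.mem_insert_of_mem _ htT, htg⟩, ?_⟩
        rintro s ⟨hs, hsg⟩
        rcases Set.mem_insert_iff.1 hs with rfl | hs
        · exact absurd hsg hgy
        · exact hun s ⟨hs, hsg⟩

lemma asymD {a : G} (ha : a⁻¹ ∉ Dos H a) :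
    ∃ T : Set G, T ⊆ (Dos H a ∪ (Dos H a)⁻¹) ∧ (∀ t ∈ T, t⁻¹ ∈ T) ∧
      (∀ g ∈ Dos H a ∪ (Dos H a)⁻¹, ∃! t, t ∈ T ∧ t⁻¹ * g ∈ H) := by
  have hdisj := Dos_disjoint ha
  have hLC := LC_Dos (H := H) a
  have hRC := RC_Dos (H := H) a
  have hcross : ∀ v ∈ Dos H a, ∀ w ∈ Dos H a, w ∈ Dos H v := fun v hv w hw =>
    (Dos_eq_of_mem hv).symm ▸ hw
  obtain ⟨T₀, hT₀L, hT₀R, huL, huR⟩ :=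
    CT (Dos H a).ncard (Dos H a) (Dos H a) le_rfl rfl hLC hRC hcross
  refine ⟨T₀ ∪ T₀⁻¹, ?_, ?_, ?_⟩
  · apply Set.union_subset
    · exact hT₀L.trans Set.subset_union_left
    · refine Set.Subset.trans ?_ Set.subset_union_right
      intro t ht
      rw [Set.mem_inv] at ht ⊢
      exact hT₀L ht
  · intro t ht
    rcases ht with ht | ht
    · exact Or.inr (by rwa [Set.mem_inv, inv_inv])
    · exact Or.inl (by rwa [Set.mem_inv] at ht)
  · intro g hg
    rcases hg with hg | hg
    · obtain ⟨t, ⟨htT, htg⟩, hun⟩ := huL g hg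
      refine ⟨t, ⟨Or.inl htT, htg⟩, ?_⟩
      rintro s ⟨hs, hsg⟩
      rcases hs with hs | hs
      · exact hun s ⟨hs, hsg⟩
      · exfalso
        have hsi : s⁻¹ ∈ T₀ := (Set.mem_inv).1 hs
        have hsD : s⁻¹ ∈ Dos H a := hT₀L hsi
        have hgD : g ∈ (Dos H a)⁻¹ := by
          rw [Set.mem_inv]
          have : g⁻¹ = (s⁻¹ * g)⁻¹ * s⁻¹ := by group
          rw [this]
          exact RC_Dos a s⁻¹ hsD _ (inv_mem hsg)
        exact Set.eq_empty_iff_forall_notMem.1 hdisj g ⟨hg, hgD⟩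
    · have hgi : g⁻¹ ∈ Dos H a := (Set.mem_inv).1 hg
      obtain ⟨t, ⟨htT, htg⟩, hun⟩ := huR g⁻¹ hgi
      refine ⟨t⁻¹, ⟨Or.inr (by rwa [Set.mem_inv, inv_inv]), ?_⟩, ?_⟩
      · rw [inv_inv]
        have : t * g = (g⁻¹ * t⁻¹)⁻¹ := by group
        rw [this]; exact inv_mem htg
      · rintro s ⟨hs, hsg⟩
        rcases hs with hs | hs
        · exfalso
          have hsD : s ∈ Dos H a := hT₀L hs
          have hgD : g ∈ Dos H a := by
            have : g = s * (s⁻¹ * g) := by group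
            rw [this]; exact LC_Dos a s hsD _ hsg
          exact Set.eq_empty_iff_forall_notMem.1 hdisj g ⟨hgD, hg⟩
        · have hsi : s⁻¹ ∈ T₀ := (Set.mem_inv).1 hs
          have hst : s⁻¹ = t := by
            apply hun s⁻¹
            refine ⟨hsi, ?_⟩
            have : g⁻¹ * (s⁻¹)⁻¹ = (s⁻¹ * g)⁻¹ := by group
            rw [this]; exact inv_mem hsg
          rw [← hst, inv_inv]

lemma grand (hyp : Odd (Nat.card H) ∨ Odd H.index) :
    ∀ n (U : Set G), U.ncard ≤ n → U⁻¹ = U →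
    (∀ u ∈ U, ∀ h ∈ H, u * h ∈ U) → (∀ u ∈ U, ∀ h ∈ H, h * u ∈ U) →
    ∃ T : Set G, T ⊆ U ∧ (∀ t ∈ T, t⁻¹ ∈ T) ∧
      (∀ g ∈ U, ∃! t, t ∈ T ∧ t⁻¹ * g ∈ H) := by
  intro n
  induction n with
  | zero =>
    intro U hn _ _ _
    have : U = ∅ := by
      rw [← Set.ncard_eq_zero (Set.toFinite U)]; omega
    subst this
    exact ⟨∅, by simp, by simp, by simp⟩
  | succ n ih =>
    intro U hn hUinv hLCU hRCU
    rcases eq_or_ne U ∅ with rfl | hne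
    · exact ⟨∅, by simp, by simp, by simp⟩
    obtain ⟨a, haU⟩ := Set.nonempty_iff_ne_empty.2 hne
    have hDsub : Dos H a ⊆ U := by
      rintro g ⟨h₁, hh₁, h₂, hh₂, rfl⟩
      exact hLCU _ (hRCU a haU h₁ hh₁) h₂ hh₂
    obtain ⟨W, hWsub, hWinv, hWLC, hWRC, haW, T₁, hT₁W, hT₁inv, hT₁u⟩ :
        ∃ W : Set G, W ⊆ U ∧ W⁻¹ = W ∧ (∀ u ∈ W, ∀ h ∈ H, u * h ∈ W) ∧
          (∀ u ∈ W, ∀ h ∈ H, h * u ∈ W) ∧ a ∈ W ∧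
          ∃ T₁ : Set G, T₁ ⊆ W ∧ (∀ t ∈ T₁, t⁻¹ ∈ T₁) ∧
            (∀ g ∈ W, ∃! t, t ∈ T₁ ∧ t⁻¹ * g ∈ H) := by
      by_cases hsym : a⁻¹ ∈ Dos H a
      · obtain ⟨T₁, h1, h2, h3⟩ := symD hyp hsym
        exact ⟨Dos H a, hDsub, Dos_inv_eq hsym, LC_Dos a, RC_Dos a, mem_Dos_self a,
          T₁, h1, h2, h3⟩
      · obtain ⟨T₁, h1, h2, h3⟩ := asymD hsym
        refine ⟨Dos H a ∪ (Dos H a)⁻¹, ?_, ?_, ?_, ?_, Or.inl (mem_Dos_self a),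
          T₁, h1, h2, h3⟩
        · apply Set.union_subset hDsub
          intro g hg
          rw [Set.mem_inv] at hg
          exact (mem_iff_inv_mem hUinv).1 (hDsub hg)
        · ext g
          simp only [Set.mem_inv, Set.mem_union, inv_inv]
          exact or_comm
        · intro u hu h hh
          rcases hu with hu | hu
          · exact Or.inl (LC_Dos a u hu h hh)
          · refine Or.inr ?_
            rw [inv_Dos] at hu ⊢
            exact LC_Dos a⁻¹ u hu h hh
        · intro u hu h hh
          rcases hu with hu | hu
          · exact Or.inl (RC_Dos a u hu h hh)
          · refine Or.inr ?_
            rw [inv_Dos] at hu ⊢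
            exact RC_Dos a⁻¹ u hu h hh
    set U' := U \ W with hU'
    have hU'inv : U'⁻¹ = U' := by
      ext g
      simp only [Set.mem_inv, hU', Set.mem_diff]
      rw [mem_iff_inv_mem hUinv, mem_iff_inv_mem hWinv]
    have hLC' : ∀ u ∈ U', ∀ h ∈ H, u * h ∈ U' := by
      rintro u ⟨huU, huW⟩ h hh
      refine ⟨hLCU u huU h hh, fun hc => huW ?_⟩
      have : u = (u * h) * h⁻¹ := by group
      rw [this]
      exact hWLC _ hc _ (inv_mem hh)
    have hRC' : ∀ u ∈ U', ∀ h ∈ H, h * u ∈ U' := by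
      rintro u ⟨huU, huW⟩ h hh
      refine ⟨hRCU u huU h hh, fun hc => huW ?_⟩
      have : u = h⁻¹ * (h * u) := by group
      rw [this]
      exact hWRC _ hc _ (inv_mem hh)
    have hss : U' ⊂ U := by
      refine ⟨Set.diff_subset, fun hc => ?_⟩
      exact (hc haU).2 haW
    have hlt : U'.ncard ≤ n := by
      have := Set.ncard_lt_ncard hss (Set.toFinite U)
      omega
    obtain ⟨T', hT'U, hT'inv, hT'u⟩ := ih U' hlt hU'inv hLC' hRC'
    refine ⟨T₁ ∪ T', ?_, ?_, ?_⟩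
    · exact Set.union_subset (hT₁W.trans hWsub) (hT'U.trans Set.diff_subset)
    · intro t ht
      rcases ht with ht | ht
      · exact Or.inl (hT₁inv t ht)
      · exact Or.inr (hT'inv t ht)
    · intro g hg
      by_cases hgW : g ∈ W
      · obtain ⟨t, ⟨htT, htg⟩, hun⟩ := hT₁u g hgW
        refine ⟨t, ⟨Or.inl htT, htg⟩, ?_⟩
        rintro s ⟨hs, hsg⟩
        rcases hs with hs | hs
        · exact hun s ⟨hs, hsg⟩
        · exfalso
          have hsU' : s ∈ U' := hT'U hs
          have : g ∈ U' := by
            have hgs : g = s * (s⁻¹ * g) := by group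
            rw [hgs]
            exact hLC' s hsU' _ hsg
          exact this.2 hgW
      · have hg' : g ∈ U' := ⟨hg, hgW⟩
        obtain ⟨t, ⟨htT, htg⟩, hun⟩ := hT'u g hg'
        refine ⟨t, ⟨Or.inr htT, htg⟩, ?_⟩
        rintro s ⟨hs, hsg⟩
        rcases hs with hs | hs
        · exfalso
          apply hgW
          have hgs : g = s * (s⁻¹ * g) := by group
          rw [hgs]
          exact hWLC s (hT₁W hs) _ hsg
        · exact hun s ⟨hs, hsg⟩

end Assemble
end PerfectCodeAux

theorem perfectCode_of_odd_card_or_odd_index {G : Type*} [Group G] [Finite G]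
    (H : Subgroup G) (h : Odd (Nat.card H) ∨ Odd H.index) :
    IsPerfectCode H := by
  classical
  obtain ⟨T, hTU, hTinv, hTu⟩ :=
    PerfectCodeAux.grand (H := H) h (Set.univ.ncard) Set.univ le_rfl
      (by ext g; simp) (by intro u _ h _; exact Set.mem_univ _)
      (by intro u _ h _; exact Set.mem_univ _)
  refine ⟨T, ?_, fun g => hTu g (Set.mem_univ g)⟩
  ext t
  rw [Set.mem_inv]
  constructor
  · intro ht
    have := hTinv t⁻¹ ht
    rwa [inv_inv] at this
  · intro ht
    exact hTinv t ht
end
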